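/- arXiv:1305.7504 — 10 statements merged into one kernel-verified Lean document; each statement's English description precedes it below -/
import Mathlib

section
/- For all a, b, c in [0,1], the inequality a·c + b·√(1−a²)·√(1−c²) ≤ √(a² + b² − a²·b²) holds. -/
/-- For all `a, b, c ∈ [0,1]`,
`a·c + b·√(1−a²)·√(1−c²) ≤ √(a² ⊕ b²)` where `x ⊕ y = x + y − x·y`. -/
theorem oplus_sqrt_ineq (a b c : ℝ)
    (ha : a ∈ Set.Icc (0:ℝ) 1) (hb : b ∈ Set.Icc (0:ℝ) 1) (hc : c ∈ Set.Icc (0:ℝ) 1) :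
    a * c + b * Real.sqrt (1 - a ^ 2) * Real.sqrt (1 - c ^ 2) ≤
      Real.sqrt (a ^ 2 + b ^ 2 - a ^ 2 * b ^ 2) := by
  obtain ⟨ha0, ha1⟩ := ha
  obtain ⟨hb0, hb1⟩ := hb
  obtain ⟨hc0, hc1⟩ := hc
  set s := Real.sqrt (1 - a ^ 2) with hs
  set t := Real.sqrt (1 - c ^ 2) with ht
  have hs0 : 0 ≤ s := Real.sqrt_nonneg _
  have ht0 : 0 ≤ t := Real.sqrt_nonneg _
  have hs2 : s ^ 2 = 1 - a ^ 2 := Real.sq_sqrt (by nlinarith)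
  have ht2 : t ^ 2 = 1 - c ^ 2 := Real.sq_sqrt (by nlinarith)
  have hL : 0 ≤ a * c + b * s * t := by positivity
  apply (Real.le_sqrt hL (by nlinarith)).mpr
  have hid : a^2 + b^2 - a^2*b^2 - (a*c + b*s*t)^2 = (a*t - b*s*c)^2 := by
    linear_combination (-(b^2*t^2) - b^2*c^2) * hs2 + (-(a^2) - b^2 + a^2*b^2) * ht2
  nlinarith [sq_nonneg (a*t - b*s*c), hid]
end

section
/- Let g, g' ∈ GL(m, ℝ) each have a gap between their first and second singular values (s₁ > s₂). Then α(g,g') ≤ ‖g'g‖/(‖g'‖·‖g‖) ≤ β(g,g'), where α(g,g') = |⟨v₊(g), v₋(g')⟩| is the correlation between the most expanding output direction of g and the most expanding input direction of g', and β(g,g') = √(σ(g)² ⊕ α(g,g')² ⊕ σ(g')²) with σ(g) = s₂(g)/s₁(g) and a ⊕ b = a + b − ab. -/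
open scoped RealInnerProductSpace

/-- The "exotic" operation `a ⊕ b := a + b − a·b`. -/
def oplus (a b : ℝ) : ℝ := a + b - a * b

lemma sq_le_sq_of_le {x y : ℝ} (hx : 0 ≤ x) (h : x ≤ y) : x ^ 2 ≤ y ^ 2 := by nlinarith

lemma cs2_aux (G s t A a wn : ℝ) (hs : s ^ 2 = 1 - A ^ 2) :
    (|a| * G * A + s * (t * G * wn)) ^ 2
      ≤ G ^ 2 * (A ^ 2 + (1 - A ^ 2) * t ^ 2) * (a ^ 2 + wn ^ 2) := by
  have key : G ^ 2 * (A ^ 2 + (1 - A ^ 2) * t ^ 2) * (a ^ 2 + wn ^ 2)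
      - (|a| * G * A + s * (t * G * wn)) ^ 2 = G ^ 2 * (A * wn - s * t * |a|) ^ 2 := by
    rw [← sq_abs a, ← hs]; ring
  have h0 : 0 ≤ G ^ 2 * (A * wn - s * t * |a|) ^ 2 :=
    mul_nonneg (sq_nonneg G) (sq_nonneg _)
  linarith

lemma decomp_aux {m : ℕ} (v u : EuclideanSpace ℝ (Fin m)) (hv : ‖v‖ = 1) :
    ⟪v, u - ⟪v, u⟫ • v⟫ = 0 ∧ ‖u - ⟪v, u⟫ • v‖ ^ 2 = ‖u‖ ^ 2 - ⟪v, u⟫ ^ 2 := by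
  have h1 : ⟪v, u - ⟪v, u⟫ • v⟫ = 0 := by
    rw [inner_sub_right, real_inner_smul_right, real_inner_self_eq_norm_sq, hv]; ring
  refine ⟨h1, ?_⟩
  have h2 : ⟪⟪v, u⟫ • v, u - ⟪v, u⟫ • v⟫ = 0 := by
    rw [real_inner_smul_left, h1, mul_zero]
  have h3 := norm_add_sq_real (⟪v, u⟫ • v) (u - ⟪v, u⟫ • v)
  rw [h2] at h3
  have h4 : ⟪v, u⟫ • v + (u - ⟪v, u⟫ • v) = u := by abel
  rw [h4, norm_smul, hv] at h3
  simp only [Real.norm_eq_abs, mul_one] at h3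
  rw [sq_abs] at h3
  linarith


set_option maxHeartbeats 1000000 in
/-- Let `g, g'` be invertible linear maps on `ℝ^m`, each with a gap `s₁ > s₂` between the
first two singular values.  The singular-value data is encoded by: unit vectors `v₋, v₊`
with `g v₋ = ‖g‖ v₊`, a number `σ(g) = s₂(g)/s₁(g) ∈ [0,1)`, and the fact that `g` maps the
orthogonal complement of `v₋` into the orthogonal complement of `v₊`, contracting it by the
factor `σ(g)‖g‖`.  Then, with `α(g,g') := |⟪v₊(g), v₋(g')⟫|` and
`β(g,g') := √(σ(g)² ⊕ α(g,g')² ⊕ σ(g')²)`,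
`α(g,g') ≤ ‖g'g‖/(‖g'‖·‖g‖) ≤ β(g,g')`. -/
theorem norm_product_two_bounds {m : ℕ}
    (g g' : EuclideanSpace ℝ (Fin m) →L[ℝ] EuclideanSpace ℝ (Fin m))
    (hg_inv : ∃ h, g.comp h = ContinuousLinearMap.id ℝ (EuclideanSpace ℝ (Fin m)) ∧
      h.comp g = ContinuousLinearMap.id ℝ (EuclideanSpace ℝ (Fin m)))
    (hg'_inv : ∃ h, g'.comp h = ContinuousLinearMap.id ℝ (EuclideanSpace ℝ (Fin m)) ∧
      h.comp g' = ContinuousLinearMap.id ℝ (EuclideanSpace ℝ (Fin m)))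
    (vm vp vm' vp' : EuclideanSpace ℝ (Fin m)) (σg σg' : ℝ)
    (hvm : ‖vm‖ = 1) (hvp : ‖vp‖ = 1) (hvm' : ‖vm'‖ = 1) (hvp' : ‖vp'‖ = 1)
    (hgv : g vm = ‖g‖ • vp) (hg'v : g' vm' = ‖g'‖ • vp')
    (hσg0 : 0 ≤ σg) (hσg1 : σg < 1) (hσg'0 : 0 ≤ σg') (hσg'1 : σg' < 1)
    (hsvd : ∀ w, ⟪vm, w⟫ = 0 → ⟪vp, g w⟫ = 0 ∧ ‖g w‖ ≤ σg * ‖g‖ * ‖w‖)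
    (hsvd' : ∀ w, ⟪vm', w⟫ = 0 → ⟪vp', g' w⟫ = 0 ∧ ‖g' w‖ ≤ σg' * ‖g'‖ * ‖w‖) :
    |⟪vp, vm'⟫| ≤ ‖g'.comp g‖ / (‖g'‖ * ‖g‖) ∧
    ‖g'.comp g‖ / (‖g'‖ * ‖g‖) ≤
      Real.sqrt (oplus (oplus (σg ^ 2) (|⟪vp, vm'⟫| ^ 2)) (σg' ^ 2)) := by
  have hg0 : 0 < ‖g‖ := by
    refine norm_pos_iff.mpr fun hzero => ?_
    obtain ⟨h, _, hh2⟩ := hg_inv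
    have h5 : h (g vm) = vm := by
      have := congrArg (fun f => f vm) hh2
      simpa using this
    rw [hzero] at h5
    simp at h5
    rw [← h5] at hvm
    simp at hvm
  have hg'0 : 0 < ‖g'‖ := by
    refine norm_pos_iff.mpr fun hzero => ?_
    obtain ⟨h, _, hh2⟩ := hg'_inv
    have h5 : h (g' vm') = vm' := by
      have := congrArg (fun f => f vm') hh2
      simpa using this
    rw [hzero] at h5
    simp at h5
    rw [← h5] at hvm'
    simp at hvm'
  set α : ℝ := |⟪vp, vm'⟫| with hαdef
  clear_value α
  have hα0 : 0 ≤ α := by rw [hαdef]; exact abs_nonneg _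
  have hα1 : α ≤ 1 := by
    rw [hαdef]
    have := abs_real_inner_le_norm vp vm'
    rw [hvp, hvm', mul_one] at this
    exact this
  have hα2 : α ^ 2 ≤ 1 := sq_le_sq_of_le hα0 hα1 |>.trans_eq (one_pow 2)
  have hσ2 : σg ^ 2 ≤ 1 := by
    have := sq_le_sq_of_le hσg0 hσg1.le
    simpa using this
  have hσ'2 : σg' ^ 2 ≤ 1 := by
    have := sq_le_sq_of_le hσg'0 hσg'1.le
    simpa using this
  have hprodpos : 0 < ‖g'‖ * ‖g‖ := mul_pos hg'0 hg0
  constructor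
  · -- lower bound
    obtain ⟨hperp, _⟩ := decomp_aux vm' vp hvm'
    set w' := vp - ⟪vm', vp⟫ • vm' with hw'
    obtain ⟨hperp', _⟩ := hsvd' w' hperp
    have hrepr : g' vp = ⟪vm', vp⟫ • (‖g'‖ • vp') + g' w' := by
      have hvpr : vp = ⟪vm', vp⟫ • vm' + w' := by rw [hw']; abel
      calc g' vp = g' (⟪vm', vp⟫ • vm' + w') := by rw [← hvpr]
        _ = ⟪vm', vp⟫ • g' vm' + g' w' := by rw [map_add, map_smul]
        _ = ⟪vm', vp⟫ • (‖g'‖ • vp') + g' w' := by rw [hg'v]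
    have hinner : ⟪vp', g' vp⟫ = ⟪vm', vp⟫ * ‖g'‖ := by
      rw [hrepr, inner_add_right, hperp', real_inner_smul_right, real_inner_smul_right,
        real_inner_self_eq_norm_sq, hvp']
      ring
    have hCS : |⟪vp', g' vp⟫| ≤ ‖g' vp‖ := by
      have := abs_real_inner_le_norm vp' (g' vp)
      rwa [hvp', one_mul] at this
    have h1 : α * ‖g'‖ ≤ ‖g' vp‖ := by
      rw [hinner, abs_mul, abs_of_pos hg'0] at hCS
      rw [hαdef, real_inner_comm]
      exact hCS
    have h2 : ‖g‖ * ‖g' vp‖ ≤ ‖g'.comp g‖ := by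
      have h3 : ‖(g'.comp g) vm‖ = ‖g‖ * ‖g' vp‖ := by
        rw [ContinuousLinearMap.comp_apply, hgv, map_smul, norm_smul, Real.norm_eq_abs,
          abs_of_pos hg0]
      have h4 := (g'.comp g).le_opNorm vm
      rw [hvm, mul_one, h3] at h4
      exact h4
    rw [le_div_iff₀ hprodpos]
    calc α * (‖g'‖ * ‖g‖) = ‖g‖ * (α * ‖g'‖) := by ring
      _ ≤ ‖g‖ * ‖g' vp‖ := mul_le_mul_of_nonneg_left h1 (le_of_lt hg0)
      _ ≤ ‖g'.comp g‖ := h2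
  · -- upper bound
    set T : ℝ := α ^ 2 + (1 - α ^ 2) * σg ^ 2 with hTdef
    clear_value T
    have hT0 : 0 ≤ T := by rw [hTdef]; nlinarith [sq_nonneg α, sq_nonneg σg]
    have hT1 : T ≤ 1 := by rw [hTdef]; nlinarith [sq_nonneg α]
    set B : ℝ := T + σg' ^ 2 - T * σg' ^ 2 with hBdef
    clear_value B
    have hB0 : 0 ≤ B := by rw [hBdef]; nlinarith
    have hBeq : oplus (oplus (σg ^ 2) (α ^ 2)) (σg' ^ 2) = B := by
      rw [hBdef, hTdef]; simp only [oplus]; ring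
    rw [div_le_iff₀ hprodpos, hBeq]
    have key : ∀ u : EuclideanSpace ℝ (Fin m),
        ‖(g'.comp g) u‖ ≤ ‖g'‖ * ‖g‖ * Real.sqrt B * ‖u‖ := by
      intro u
      obtain ⟨hwp, hwn⟩ := decomp_aux vm u hvm
      set a : ℝ := ⟪vm, u⟫ with hadef
      set w := u - a • vm with hwdef
      obtain ⟨hgwp, hgwn⟩ := hsvd w hwp
      clear_value a w
      have hurepr : u = a • vm + w := by rw [hwdef]; abel
      have hgu : g u = a • (‖g‖ • vp) + g w := by
        calc g u = g (a • vm + w) := by rw [← hurepr]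
          _ = a • g vm + g w := by rw [map_add, map_smul]
          _ = a • (‖g‖ • vp) + g w := by rw [hgv]
      have hperpgu : ⟪a • (‖g‖ • vp), g w⟫ = 0 := by
        rw [real_inner_smul_left, real_inner_smul_left, hgwp]; ring
      have hgunorm : ‖g u‖ ^ 2 = a ^ 2 * ‖g‖ ^ 2 + ‖g w‖ ^ 2 := by
        rw [hgu, norm_add_sq_real, hperpgu, norm_smul, norm_smul, hvp]
        simp only [Real.norm_eq_abs, mul_one, mul_zero, add_zero]
        rw [mul_pow, sq_abs, sq_abs]
      have hwu : a ^ 2 + ‖w‖ ^ 2 = ‖u‖ ^ 2 := by linarith [hwn]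
      obtain ⟨hzp, hzn⟩ := decomp_aux vm' (g u) hvm'
      set b : ℝ := ⟪vm', g u⟫ with hbdef
      set z := g u - b • vm' with hzdef
      obtain ⟨hg'zp, hg'zn⟩ := hsvd' z hzp
      clear_value b z
      have hq : |⟪vm', g w⟫| ≤ Real.sqrt (1 - α ^ 2) * ‖g w‖ := by
        have hqn : ‖vm' - ⟪vp, vm'⟫ • vp‖ ^ 2 = 1 - ⟪vp, vm'⟫ ^ 2 := by
          obtain ⟨_, h⟩ := decomp_aux vp vm' hvp
          rw [h, hvm']; ring
        have hq1 : ⟪vm', g w⟫ = ⟪vm' - ⟪vp, vm'⟫ • vp, g w⟫ := by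
          rw [inner_sub_left, real_inner_smul_left, hgwp]; ring
        have hq2 : |⟪vm' - ⟪vp, vm'⟫ • vp, g w⟫| ≤ ‖vm' - ⟪vp, vm'⟫ • vp‖ * ‖g w‖ :=
          abs_real_inner_le_norm _ _
        have hq3 : ‖vm' - ⟪vp, vm'⟫ • vp‖ = Real.sqrt (1 - α ^ 2) := by
          rw [← Real.sqrt_sq (norm_nonneg _), hqn, hαdef, sq_abs]
        rw [hq1]
        rw [hq3] at hq2
        exact hq2
      have hbb : |b| ≤ |a| * ‖g‖ * α + Real.sqrt (1 - α ^ 2) * (σg * ‖g‖ * ‖w‖) := by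
        have hbexp : b = a * ‖g‖ * ⟪vm', vp⟫ + ⟪vm', g w⟫ := by
          rw [hbdef, hgu, inner_add_right, real_inner_smul_right, real_inner_smul_right]
          ring
        rw [hbexp]
        calc |a * ‖g‖ * ⟪vm', vp⟫ + ⟪vm', g w⟫|
            ≤ |a * ‖g‖ * ⟪vm', vp⟫| + |⟪vm', g w⟫| := abs_add_le _ _
          _ ≤ |a| * ‖g‖ * α + Real.sqrt (1 - α ^ 2) * (σg * ‖g‖ * ‖w‖) := by
              gcongr
              · rw [abs_mul, abs_mul, abs_of_pos hg0, hαdef, real_inner_comm]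
              · calc |⟪vm', g w⟫| ≤ Real.sqrt (1 - α ^ 2) * ‖g w‖ := hq
                  _ ≤ Real.sqrt (1 - α ^ 2) * (σg * ‖g‖ * ‖w‖) := by
                      gcongr
      have hs : Real.sqrt (1 - α ^ 2) ^ 2 = 1 - α ^ 2 :=
        Real.sq_sqrt (by linarith)
      have hb2 : b ^ 2 ≤ ‖g‖ ^ 2 * T * ‖u‖ ^ 2 := by
        have h1 : b ^ 2 ≤ (|a| * ‖g‖ * α + Real.sqrt (1 - α ^ 2) * (σg * ‖g‖ * ‖w‖)) ^ 2 := by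
          rw [← sq_abs b]
          exact sq_le_sq_of_le (abs_nonneg b) hbb
        have hCS2 := cs2_aux ‖g‖ (Real.sqrt (1 - α ^ 2)) σg α a ‖w‖ hs
        rw [hwu, ← hTdef] at hCS2
        linarith
      have hgw2 : ‖g w‖ ^ 2 ≤ σg ^ 2 * ‖g‖ ^ 2 * ‖w‖ ^ 2 := by
        have := sq_le_sq_of_le (norm_nonneg (g w)) hgwn
        calc ‖g w‖ ^ 2 ≤ (σg * ‖g‖ * ‖w‖) ^ 2 := this
          _ = σg ^ 2 * ‖g‖ ^ 2 * ‖w‖ ^ 2 := by ring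
      have hgu2 : ‖g u‖ ^ 2 ≤ ‖g‖ ^ 2 * ‖u‖ ^ 2 := by
        rw [hgunorm, ← hwu]
        have h6 : σg ^ 2 * (‖g‖ ^ 2 * ‖w‖ ^ 2) ≤ 1 * (‖g‖ ^ 2 * ‖w‖ ^ 2) :=
          mul_le_mul_of_nonneg_right hσ2 (by positivity)
        have h7 : σg ^ 2 * ‖g‖ ^ 2 * ‖w‖ ^ 2 = σg ^ 2 * (‖g‖ ^ 2 * ‖w‖ ^ 2) := by ring
        have h8 : ‖g‖ ^ 2 * (a ^ 2 + ‖w‖ ^ 2) = a ^ 2 * ‖g‖ ^ 2 + ‖g‖ ^ 2 * ‖w‖ ^ 2 := by ring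
        rw [h8]
        rw [h7] at hgw2
        linarith
      have hg'z2 : ‖g' z‖ ^ 2 ≤ σg' ^ 2 * ‖g'‖ ^ 2 * ‖z‖ ^ 2 := by
        have := sq_le_sq_of_le (norm_nonneg (g' z)) hg'zn
        calc ‖g' z‖ ^ 2 ≤ (σg' * ‖g'‖ * ‖z‖) ^ 2 := this
          _ = σg' ^ 2 * ‖g'‖ ^ 2 * ‖z‖ ^ 2 := by ring
      have hzu : g u = b • vm' + z := by rw [hzdef]; abel
      have hg'gu : (g'.comp g) u = b • (‖g'‖ • vp') + g' z := by
        rw [ContinuousLinearMap.comp_apply, hzu, map_add, map_smul, hg'v]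
      have hperp2 : ⟪b • (‖g'‖ • vp'), g' z⟫ = 0 := by
        rw [real_inner_smul_left, real_inner_smul_left, hg'zp]; ring
      have hfin2 : ‖(g'.comp g) u‖ ^ 2 = b ^ 2 * ‖g'‖ ^ 2 + ‖g' z‖ ^ 2 := by
        rw [hg'gu, norm_add_sq_real, hperp2, norm_smul, norm_smul, hvp']
        simp only [Real.norm_eq_abs, mul_one, mul_zero, add_zero]
        rw [mul_pow, sq_abs, sq_abs]
      have hchain : ‖(g'.comp g) u‖ ^ 2
          ≤ ‖g'‖ ^ 2 * ((1 - σg' ^ 2) * b ^ 2 + σg' ^ 2 * ‖g u‖ ^ 2) := by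
        have e0 : σg' ^ 2 * ‖g'‖ ^ 2 * ‖z‖ ^ 2
            = σg' ^ 2 * ‖g'‖ ^ 2 * ‖g u‖ ^ 2 - σg' ^ 2 * ‖g'‖ ^ 2 * b ^ 2 := by
          rw [hzn]; ring
        calc ‖(g'.comp g) u‖ ^ 2 = b ^ 2 * ‖g'‖ ^ 2 + ‖g' z‖ ^ 2 := hfin2
          _ ≤ b ^ 2 * ‖g'‖ ^ 2 + σg' ^ 2 * ‖g'‖ ^ 2 * ‖z‖ ^ 2 := by linarith
          _ = ‖g'‖ ^ 2 * ((1 - σg' ^ 2) * b ^ 2 + σg' ^ 2 * ‖g u‖ ^ 2) := by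
              rw [e0]; ring
      have hinner2 : (1 - σg' ^ 2) * b ^ 2 + σg' ^ 2 * ‖g u‖ ^ 2
          ≤ ‖g‖ ^ 2 * B * ‖u‖ ^ 2 := by
        have e1 : (1 - σg' ^ 2) * b ^ 2 ≤ (1 - σg' ^ 2) * (‖g‖ ^ 2 * T * ‖u‖ ^ 2) :=
          mul_le_mul_of_nonneg_left hb2 (by linarith)
        have e2 : σg' ^ 2 * ‖g u‖ ^ 2 ≤ σg' ^ 2 * (‖g‖ ^ 2 * ‖u‖ ^ 2) :=
          mul_le_mul_of_nonneg_left hgu2 (sq_nonneg _)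
        have e3 : (1 - σg' ^ 2) * (‖g‖ ^ 2 * T * ‖u‖ ^ 2) + σg' ^ 2 * (‖g‖ ^ 2 * ‖u‖ ^ 2)
            = ‖g‖ ^ 2 * B * ‖u‖ ^ 2 := by rw [hBdef]; ring
        linarith
      have hchainB : ‖(g'.comp g) u‖ ^ 2 ≤ (‖g'‖ * ‖g‖ * Real.sqrt B * ‖u‖) ^ 2 := by
        have e4 : (‖g'‖ * ‖g‖ * Real.sqrt B * ‖u‖) ^ 2
            = ‖g'‖ ^ 2 * (‖g‖ ^ 2 * B * ‖u‖ ^ 2) := by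
          rw [mul_pow, mul_pow, mul_pow, Real.sq_sqrt hB0]; ring
        rw [e4]
        calc ‖(g'.comp g) u‖ ^ 2
            ≤ ‖g'‖ ^ 2 * ((1 - σg' ^ 2) * b ^ 2 + σg' ^ 2 * ‖g u‖ ^ 2) := hchain
          _ ≤ ‖g'‖ ^ 2 * (‖g‖ ^ 2 * B * ‖u‖ ^ 2) :=
              mul_le_mul_of_nonneg_left hinner2 (sq_nonneg _)
      calc ‖(g'.comp g) u‖ = Real.sqrt (‖(g'.comp g) u‖ ^ 2) :=
            (Real.sqrt_sq (norm_nonneg _)).symm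
        _ ≤ Real.sqrt ((‖g'‖ * ‖g‖ * Real.sqrt B * ‖u‖) ^ 2) := Real.sqrt_le_sqrt hchainB
        _ = ‖g'‖ * ‖g‖ * Real.sqrt B * ‖u‖ := Real.sqrt_sq (by positivity)
    have hfin := (g'.comp g).opNorm_le_bound (by positivity) key
    calc ‖g'.comp g‖ ≤ ‖g'‖ * ‖g‖ * Real.sqrt B := hfin
      _ = Real.sqrt B * (‖g'‖ * ‖g‖) := by ring
end

section
/- Let g₀, g₁, …, g_{n−1} ∈ GL(m,ℝ) each have a gap between first and second singular values, and write g^{(i)} = g_{i−1}···g₁g₀. Then ∏_{i=1}^{n−1} α(g^{(i)}, g_i) ≤ ‖g_{n−1}···g₁g₀‖ / (‖g_{n−1}‖···‖g₁‖‖g₀‖) ≤ ∏_{i=1}^{n−1} β(g^{(i)}, g_i). -/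
open scoped RealInnerProductSpace

variable {E : Type*} [NormedAddCommGroup E] [InnerProductSpace ℝ E]

lemma decomp (e x : E) (he : ‖e‖ = 1) :
    ⟪e, x - ⟪e, x⟫ • e⟫ = 0 ∧ ‖x‖ ^ 2 = ⟪e, x⟫ ^ 2 + ‖x - ⟪e, x⟫ • e‖ ^ 2 := by
  have h1 : ⟪e, x - ⟪e, x⟫ • e⟫ = 0 := by
    rw [inner_sub_right, real_inner_smul_right, real_inner_self_eq_norm_sq, he]
    ring
  refine ⟨h1, ?_⟩
  have hx : x = ⟪e, x⟫ • e + (x - ⟪e, x⟫ • e) := by abel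
  have hp : ⟪(⟪e, x⟫ : ℝ) • e, x - ⟪e, x⟫ • e⟫ = 0 := by
    rw [real_inner_smul_left, h1]; ring
  calc ‖x‖ ^ 2 = ‖⟪e, x⟫ • e + (x - ⟪e, x⟫ • e)‖ ^ 2 := by rw [← hx]
    _ = ‖(⟪e, x⟫ : ℝ) • e‖ ^ 2 + ‖x - ⟪e, x⟫ • e‖ ^ 2 := by
        rw [norm_add_sq_real, hp]; ring
    _ = ⟪e, x⟫ ^ 2 + ‖x - ⟪e, x⟫ • e‖ ^ 2 := by
        rw [norm_smul, he, mul_one, Real.norm_eq_abs, sq_abs]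

set_option maxHeartbeats 1000000 in
lemma step_upper (A B : E →L[ℝ] E) (V V' v v' : E) (S s : ℝ)
    (hV : ‖V‖ = 1) (hV' : ‖V'‖ = 1) (hv : ‖v‖ = 1) (hv' : ‖v'‖ = 1)
    (hS0 : 0 ≤ S) (hS1 : S ≤ 1) (hs0 : 0 ≤ s) (hs1 : s ≤ 1)
    (hAV : A V = ‖A‖ • V')
    (hAw : ∀ w, ⟪V, w⟫ = 0 → ⟪V', A w⟫ = 0 ∧ ‖A w‖ ≤ S * ‖A‖ * ‖w‖)
    (hBv : B v = ‖B‖ • v')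
    (hBw : ∀ w, ⟪v, w⟫ = 0 → ⟪v', B w⟫ = 0 ∧ ‖B w‖ ≤ s * ‖B‖ * ‖w‖) :
    ‖B.comp A‖ ≤ Real.sqrt (oplus (oplus (S ^ 2) (|⟪V', v⟫| ^ 2)) (s ^ 2)) * ‖B‖ * ‖A‖ := by
  have hcV : (⟪v, V'⟫ : ℝ) = ⟪V', v⟫ := real_inner_comm V' v
  set c : ℝ := ⟪V', v⟫ with hcdef
  have hc1 : c ^ 2 ≤ 1 := by
    have h := abs_real_inner_le_norm V' v
    rw [hV', hv, one_mul] at h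
    calc c ^ 2 = |c| ^ 2 := (sq_abs c).symm
      _ ≤ 1 ^ 2 := pow_le_pow_left₀ (abs_nonneg c) h 2
      _ = 1 := one_pow 2
  have hS2 : S ^ 2 ≤ 1 := by
    calc S ^ 2 ≤ 1 ^ 2 := pow_le_pow_left₀ hS0 hS1 2
      _ = 1 := one_pow 2
  have hs2 : s ^ 2 ≤ 1 := by
    calc s ^ 2 ≤ 1 ^ 2 := pow_le_pow_left₀ hs0 hs1 2
      _ = 1 := one_pow 2
  set K : ℝ := oplus (S ^ 2) (c ^ 2) with hKdef
  have hKeq : K = c ^ 2 + S ^ 2 * (1 - c ^ 2) := by rw [hKdef]; unfold oplus; ring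
  have hK0 : 0 ≤ K := by
    rw [hKeq]
    have : 0 ≤ S ^ 2 * (1 - c ^ 2) := mul_nonneg (sq_nonneg S) (by linarith)
    positivity
  have hK1 : K ≤ 1 := by
    rw [hKeq]
    have : S ^ 2 * (1 - c ^ 2) ≤ 1 * (1 - c ^ 2) :=
      mul_le_mul_of_nonneg_right hS2 (by linarith)
    linarith
  set L : ℝ := oplus K (s ^ 2) with hLdef
  have hLeq : L = (1 - s ^ 2) * K + s ^ 2 := by rw [hLdef]; unfold oplus; ring
  have hL0 : 0 ≤ L := by
    rw [hLeq]
    have : 0 ≤ (1 - s ^ 2) * K := mul_nonneg (by linarith) hK0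
    positivity
  have hgoal : Real.sqrt (oplus (oplus (S ^ 2) (|⟪V', v⟫| ^ 2)) (s ^ 2)) = Real.sqrt L := by
    rw [hLdef, hKdef, ← hcdef, sq_abs]
  rw [hgoal]
  apply ContinuousLinearMap.opNorm_le_bound _ (by positivity)
  intro x
  -- decompose x over V
  obtain ⟨hwV, hxsq⟩ := decomp V x hV
  set a : ℝ := ⟪V, x⟫ with hadef
  set w : E := x - a • V with hwdef
  have hxd : x = a • V + w := by rw [hwdef]; abel
  obtain ⟨huorth, hunorm⟩ := hAw w hwV
  set u : E := A w with hudef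
  set y : E := A x with hydef
  have hy : y = (a * ‖A‖) • V' + u := by
    rw [hydef, hxd, map_add, map_smul, hAV, smul_smul, hudef]
  -- decompose y over v
  obtain ⟨hzv, hysq⟩ := decomp v y hv
  set b : ℝ := ⟪v, y⟫ with hbdef
  set z : E := y - b • v with hzdef
  have hyd : y = b • v + z := by rw [hzdef]; abel
  obtain ⟨hBzorth, hBznorm⟩ := hBw z hzv
  have hBy : B y = (b * ‖B‖) • v' + B z := by
    rw [hyd, map_add, map_smul, hBv, smul_smul]
  have hBysq : ‖B y‖ ^ 2 = (b * ‖B‖) ^ 2 + ‖B z‖ ^ 2 := by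
    rw [hBy, norm_add_sq_real, real_inner_smul_left, hBzorth, norm_smul, Real.norm_eq_abs,
      hv', mul_one, sq_abs]
    ring
  -- bound b
  obtain ⟨hporth, hvsq⟩ := decomp V' v hV'
  set p : E := v - c • V' with hpdef
  have hpnorm : ‖p‖ ^ 2 = 1 - c ^ 2 := by
    rw [hv, one_pow] at hvsq
    linarith
  have hvu : ⟪v, u⟫ = ⟪p, u⟫ := by
    have hvp : v = c • V' + p := by rw [hpdef]; abel
    rw [hvp, inner_add_left, real_inner_smul_left, huorth]
    ring
  have hb : b = a * ‖A‖ * c + ⟪p, u⟫ := by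
    rw [hbdef, hy, inner_add_right, real_inner_smul_right, hvu, hcV]

  have hpu : |⟪p, u⟫| ≤ ‖p‖ * ‖u‖ := abs_real_inner_le_norm p u
  have hAnn : 0 ≤ ‖A‖ := norm_nonneg A
  have hBnn : 0 ≤ ‖B‖ := norm_nonneg B
  have hbabs : |b| ≤ |a| * ‖A‖ * |c| + ‖p‖ * (S * ‖A‖ * ‖w‖) := by
    calc |b| ≤ |a * ‖A‖ * c| + |⟪p, u⟫| := by rw [hb]; exact abs_add_le _ _
      _ ≤ |a| * ‖A‖ * |c| + ‖p‖ * ‖u‖ := by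
          rw [abs_mul, abs_mul, abs_of_nonneg hAnn]
          exact add_le_add le_rfl hpu
      _ ≤ |a| * ‖A‖ * |c| + ‖p‖ * (S * ‖A‖ * ‖w‖) := by
          have : ‖p‖ * ‖u‖ ≤ ‖p‖ * (S * ‖A‖ * ‖w‖) :=
            mul_le_mul_of_nonneg_left hunorm (norm_nonneg p)
          linarith
  -- Cauchy-Schwarz on pairs (|a|,‖w‖) and (|c|, S‖p‖)
  have hbsq : b ^ 2 ≤ K * ‖A‖ ^ 2 * ‖x‖ ^ 2 := by
    have hCS : (|a| * |c| + ‖w‖ * (S * ‖p‖)) ^ 2 ≤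
        (a ^ 2 + ‖w‖ ^ 2) * (c ^ 2 + S ^ 2 * ‖p‖ ^ 2) := by
      have key : (a ^ 2 + ‖w‖ ^ 2) * (c ^ 2 + S ^ 2 * ‖p‖ ^ 2)
          - (|a| * |c| + ‖w‖ * (S * ‖p‖)) ^ 2
          = (|a| * (S * ‖p‖) - ‖w‖ * |c|) ^ 2 := by
        rw [← sq_abs a, ← sq_abs c]
        ring
      linarith [sq_nonneg (|a| * (S * ‖p‖) - ‖w‖ * |c|), key]
    have h2 : |b| ≤ (|a| * |c| + ‖w‖ * (S * ‖p‖)) * ‖A‖ := by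
      calc |b| ≤ |a| * ‖A‖ * |c| + ‖p‖ * (S * ‖A‖ * ‖w‖) := hbabs
        _ = (|a| * |c| + ‖w‖ * (S * ‖p‖)) * ‖A‖ := by ring
    have h1 : b ^ 2 ≤ ((|a| * |c| + ‖w‖ * (S * ‖p‖)) * ‖A‖) ^ 2 := by
      rw [← sq_abs b]
      exact pow_le_pow_left₀ (abs_nonneg b) h2 2
    have h3 : c ^ 2 + S ^ 2 * ‖p‖ ^ 2 = K := by rw [hpnorm, hKeq]
    calc b ^ 2 ≤ ((|a| * |c| + ‖w‖ * (S * ‖p‖)) * ‖A‖) ^ 2 := h1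
      _ = (|a| * |c| + ‖w‖ * (S * ‖p‖)) ^ 2 * ‖A‖ ^ 2 := by ring
      _ ≤ (a ^ 2 + ‖w‖ ^ 2) * (c ^ 2 + S ^ 2 * ‖p‖ ^ 2) * ‖A‖ ^ 2 :=
          mul_le_mul_of_nonneg_right hCS (sq_nonneg ‖A‖)
      _ = K * ‖A‖ ^ 2 * ‖x‖ ^ 2 := by rw [h3, ← hxsq]; ring
  have hynorm : ‖y‖ ≤ ‖A‖ * ‖x‖ := A.le_opNorm x
  have hysq' : ‖y‖ ^ 2 ≤ ‖A‖ ^ 2 * ‖x‖ ^ 2 := by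
    have := pow_le_pow_left₀ (norm_nonneg y) hynorm 2
    calc ‖y‖ ^ 2 ≤ (‖A‖ * ‖x‖) ^ 2 := this
      _ = ‖A‖ ^ 2 * ‖x‖ ^ 2 := by ring
  -- final bound on ‖B y‖²
  have hfin : ‖B y‖ ^ 2 ≤ L * (‖B‖ * ‖A‖ * ‖x‖) ^ 2 := by
    have hzsq : ‖z‖ ^ 2 = ‖y‖ ^ 2 - b ^ 2 := by rw [hysq]; ring
    have hBz2 : ‖B z‖ ^ 2 ≤ s ^ 2 * ‖B‖ ^ 2 * ‖z‖ ^ 2 := by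
      have := pow_le_pow_left₀ (norm_nonneg (B z)) hBznorm 2
      calc ‖B z‖ ^ 2 ≤ (s * ‖B‖ * ‖z‖) ^ 2 := this
        _ = s ^ 2 * ‖B‖ ^ 2 * ‖z‖ ^ 2 := by ring
    have hmain : ‖B y‖ ^ 2 ≤ ‖B‖ ^ 2 * ((1 - s ^ 2) * b ^ 2 + s ^ 2 * ‖y‖ ^ 2) := by
      rw [hBysq]
      calc (b * ‖B‖) ^ 2 + ‖B z‖ ^ 2 ≤ (b * ‖B‖) ^ 2 + s ^ 2 * ‖B‖ ^ 2 * ‖z‖ ^ 2 := by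
            linarith [hBz2]
        _ = ‖B‖ ^ 2 * ((1 - s ^ 2) * b ^ 2 + s ^ 2 * ‖y‖ ^ 2) := by rw [hzsq]; ring
    calc ‖B y‖ ^ 2 ≤ ‖B‖ ^ 2 * ((1 - s ^ 2) * b ^ 2 + s ^ 2 * ‖y‖ ^ 2) := hmain
      _ ≤ ‖B‖ ^ 2 * ((1 - s ^ 2) * (K * ‖A‖ ^ 2 * ‖x‖ ^ 2) + s ^ 2 * (‖A‖ ^ 2 * ‖x‖ ^ 2)) := by
          have h1s : (0:ℝ) ≤ 1 - s ^ 2 := by linarith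
          have t1 := mul_le_mul_of_nonneg_left hbsq h1s
          have t2 := mul_le_mul_of_nonneg_left hysq' (sq_nonneg s)
          exact mul_le_mul_of_nonneg_left (add_le_add t1 t2) (sq_nonneg ‖B‖)
      _ = L * (‖B‖ * ‖A‖ * ‖x‖) ^ 2 := by rw [hLeq]; ring
  have hca : ‖(B.comp A) x‖ = ‖B y‖ := by rw [hydef, ContinuousLinearMap.comp_apply]
  rw [hca]
  have hrhs : Real.sqrt L * ‖B‖ * ‖A‖ * ‖x‖ = Real.sqrt (L * (‖B‖ * ‖A‖ * ‖x‖) ^ 2) := by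
    rw [Real.sqrt_mul hL0, Real.sqrt_sq (by positivity)]
    ring
  rw [hrhs]
  calc ‖B y‖ = Real.sqrt (‖B y‖ ^ 2) := (Real.sqrt_sq (norm_nonneg _)).symm
    _ ≤ Real.sqrt (L * (‖B‖ * ‖A‖ * ‖x‖) ^ 2) := Real.sqrt_le_sqrt hfin
lemma norm_apply_lower (B : E →L[ℝ] E) (v v' x : E) (hv : ‖v‖ = 1) (hv' : ‖v'‖ = 1)
    (hBv : B v = ‖B‖ • v') (hBw : ∀ w, ⟪v, w⟫ = 0 → ⟪v', B w⟫ = 0) :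
    |⟪v, x⟫| * ‖B‖ ≤ ‖B x‖ := by
  obtain ⟨h1, _⟩ := decomp v x hv
  set c : ℝ := ⟪v, x⟫ with hc
  set w : E := x - c • v with hw
  have hxd : x = c • v + w := by rw [hw]; abel
  have hBx : B x = (c * ‖B‖) • v' + B w := by
    rw [hxd, map_add, map_smul, hBv, smul_smul]
  have horth : ⟪v', B w⟫ = 0 := hBw w h1
  have : ‖B x‖ ^ 2 = (c * ‖B‖) ^ 2 + ‖B w‖ ^ 2 := by
    rw [hBx, norm_add_sq_real, real_inner_smul_left, horth, norm_smul, Real.norm_eq_abs,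
      hv', mul_one, sq_abs]
    ring
  have h2 : (|c| * ‖B‖) ^ 2 ≤ ‖B x‖ ^ 2 := by
    rw [this, mul_pow, sq_abs, ← mul_pow]
    nlinarith [sq_nonneg (‖B w‖)]
  have h3 : 0 ≤ |c| * ‖B‖ := by positivity
  nlinarith [norm_nonneg (B x)]

/-- Let `g₀, …, g_{n−1}` be invertible linear maps on `ℝ^m` with first singular value gaps,
and assume all partial products `g^{(i)} = g_{i−1}···g₀` (here `G i`, `G 0 = id`,
`G (i+1) = g i ∘ G i`) also have first singular value gaps.  The singular data of `g i`
(resp. `G i`) is encoded by unit vectors `vm i, vp i` (resp. `Vm i, Vp i`) and the second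
singular value ratio `σ i ∈ [0,1)` (resp. `Sg i ∈ [0,1)`).  With
`α(g^{(i)}, g_i) = |⟪Vp i, vm i⟫|` and `β(g^{(i)}, g_i) = √(Sg i² ⊕ α² ⊕ σ i²)`, one has
`∏_{i=1}^{n−1} α(g^{(i)},g_i) ≤ ‖g_{n−1}···g₀‖/(‖g_{n−1}‖···‖g₀‖) ≤ ∏_{i=1}^{n−1} β(g^{(i)},g_i)`. -/
theorem norm_product_chain_bounds {m : ℕ} (n : ℕ) (hn : 1 ≤ n)
    (g G : ℕ → (EuclideanSpace ℝ (Fin m) →L[ℝ] EuclideanSpace ℝ (Fin m)))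
    (hG0 : G 0 = ContinuousLinearMap.id ℝ (EuclideanSpace ℝ (Fin m)))
    (hGS : ∀ i, G (i + 1) = (g i).comp (G i))
    (hg_inv : ∀ i < n, ∃ h, (g i).comp h = ContinuousLinearMap.id ℝ (EuclideanSpace ℝ (Fin m)) ∧
      h.comp (g i) = ContinuousLinearMap.id ℝ (EuclideanSpace ℝ (Fin m)))
    (vm vp Vm Vp : ℕ → EuclideanSpace ℝ (Fin m)) (σ Sg : ℕ → ℝ)
    (hvm : ∀ i < n, ‖vm i‖ = 1) (hvp : ∀ i < n, ‖vp i‖ = 1)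
    (hVm : ∀ i, 1 ≤ i → i < n → ‖Vm i‖ = 1) (hVp : ∀ i, 1 ≤ i → i < n → ‖Vp i‖ = 1)
    (hgv : ∀ i < n, g i (vm i) = ‖g i‖ • vp i)
    (hGv : ∀ i, 1 ≤ i → i < n → G i (Vm i) = ‖G i‖ • Vp i)
    (hσ0 : ∀ i < n, 0 ≤ σ i) (hσ1 : ∀ i < n, σ i < 1)
    (hSg0 : ∀ i, 1 ≤ i → i < n → 0 ≤ Sg i) (hSg1 : ∀ i, 1 ≤ i → i < n → Sg i < 1)
    (hsvd : ∀ i < n, ∀ w, ⟪vm i, w⟫ = 0 →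
      ⟪vp i, g i w⟫ = 0 ∧ ‖g i w‖ ≤ σ i * ‖g i‖ * ‖w‖)
    (hSvd : ∀ i, 1 ≤ i → i < n → ∀ w, ⟪Vm i, w⟫ = 0 →
      ⟪Vp i, G i w⟫ = 0 ∧ ‖G i w‖ ≤ Sg i * ‖G i‖ * ‖w‖) :
    (∏ i ∈ Finset.Ico 1 n, |⟪Vp i, vm i⟫|) ≤ ‖G n‖ / ∏ i ∈ Finset.range n, ‖g i‖ ∧
    ‖G n‖ / ∏ i ∈ Finset.range n, ‖g i‖ ≤
      ∏ i ∈ Finset.Ico 1 n,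
        Real.sqrt (oplus (oplus ((Sg i) ^ 2) (|⟪Vp i, vm i⟫| ^ 2)) ((σ i) ^ 2)) := by
  -- positivity of the norms of the g i
  have hgpos : ∀ i < n, 0 < ‖g i‖ := by
    intro i hi
    obtain ⟨h, _, hhg⟩ := hg_inv i hi
    have h1 : h ((g i) (vm i)) = vm i := by
      have := congrArg (fun T => T (vm i)) hhg
      simpa using this
    have hne : g i (vm i) ≠ 0 := by
      intro h0
      rw [h0, map_zero] at h1
      have h2 := hvm i hi
      rw [← h1] at h2
      simp at h2
    rw [hgv i hi] at hne
    have hne' : ‖g i‖ ≠ 0 := by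
      intro h0
      rw [h0, zero_smul] at hne
      exact hne rfl
    exact lt_of_le_of_ne (norm_nonneg _) (Ne.symm hne')
  -- the main induction
  have main : ∀ k, 1 ≤ k → k ≤ n →
      (∏ i ∈ Finset.Ico 1 k, |⟪Vp i, vm i⟫|) * ∏ i ∈ Finset.range k, ‖g i‖ ≤ ‖G k‖ ∧
      ‖G k‖ ≤ (∏ i ∈ Finset.Ico 1 k,
          Real.sqrt (oplus (oplus ((Sg i) ^ 2) (|⟪Vp i, vm i⟫| ^ 2)) ((σ i) ^ 2))) *
        ∏ i ∈ Finset.range k, ‖g i‖ := by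
    intro k hk
    induction k, hk using Nat.le_induction with
    | base =>
      intro _
      have hG1 : G 1 = g 0 := by
        rw [hGS 0, hG0, ContinuousLinearMap.comp_id]
      rw [Finset.Ico_self, Finset.prod_empty, Finset.prod_empty, Finset.prod_range_one,
        hG1, one_mul]
      exact ⟨le_rfl, le_rfl⟩
    | succ k hk ih =>
      intro hkn
      have hkltn : k < n := hkn
      have hkn' : k ≤ n := le_of_lt hkltn
      obtain ⟨ihl, ihu⟩ := ih hkn'
      have hGk1 : G (k + 1) = (g k).comp (G k) := hGS k
      -- lower step
      have hlow : ‖G k‖ * (|⟪Vp k, vm k⟫| * ‖g k‖) ≤ ‖G (k + 1)‖ := by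
        have h1 : ‖(g k).comp (G k) (Vm k)‖ ≤ ‖G (k + 1)‖ := by
          have := ((g k).comp (G k)).le_opNorm (Vm k)
          rw [hVm k hk hkltn, mul_one] at this
          rw [hGk1]
          exact this
        have h2 : (g k).comp (G k) (Vm k) = ‖G k‖ • (g k (Vp k)) := by
          rw [ContinuousLinearMap.comp_apply, hGv k hk hkltn, map_smul]
        have h3 : ‖(g k).comp (G k) (Vm k)‖ = ‖G k‖ * ‖g k (Vp k)‖ := by
          rw [h2, norm_smul, Real.norm_eq_abs, abs_of_nonneg (norm_nonneg _)]
        have h4 : |⟪vm k, Vp k⟫| * ‖g k‖ ≤ ‖g k (Vp k)‖ :=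
          norm_apply_lower (g k) (vm k) (vp k) (Vp k) (hvm k hkltn) (hvp k hkltn)
            (hgv k hkltn) (fun w hw => (hsvd k hkltn w hw).1)
        have h5 : |⟪Vp k, vm k⟫| = |⟪vm k, Vp k⟫| := by rw [real_inner_comm]
        calc ‖G k‖ * (|⟪Vp k, vm k⟫| * ‖g k‖)
            = ‖G k‖ * (|⟪vm k, Vp k⟫| * ‖g k‖) := by rw [h5]
          _ ≤ ‖G k‖ * ‖g k (Vp k)‖ := mul_le_mul_of_nonneg_left h4 (norm_nonneg _)
          _ = ‖(g k).comp (G k) (Vm k)‖ := h3.symm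
          _ ≤ ‖G (k + 1)‖ := h1
      -- upper step
      have hup : ‖G (k + 1)‖ ≤
          Real.sqrt (oplus (oplus ((Sg k) ^ 2) (|⟪Vp k, vm k⟫| ^ 2)) ((σ k) ^ 2)) *
            ‖g k‖ * ‖G k‖ := by
        rw [hGk1]
        exact step_upper (G k) (g k) (Vm k) (Vp k) (vm k) (vp k) (Sg k) (σ k)
          (hVm k hk hkltn) (hVp k hk hkltn) (hvm k hkltn) (hvp k hkltn)
          (hSg0 k hk hkltn) (le_of_lt (hSg1 k hk hkltn))
          (hσ0 k hkltn) (le_of_lt (hσ1 k hkltn))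
          (hGv k hk hkltn) (hSvd k hk hkltn) (hgv k hkltn) (hsvd k hkltn)
      rw [Finset.prod_Ico_succ_top hk, Finset.prod_Ico_succ_top hk, Finset.prod_range_succ]
      constructor
      · calc ((∏ i ∈ Finset.Ico 1 k, |⟪Vp i, vm i⟫|) * |⟪Vp k, vm k⟫|) *
            ((∏ i ∈ Finset.range k, ‖g i‖) * ‖g k‖)
            = ((∏ i ∈ Finset.Ico 1 k, |⟪Vp i, vm i⟫|) * ∏ i ∈ Finset.range k, ‖g i‖) *
              (|⟪Vp k, vm k⟫| * ‖g k‖) := by ring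
          _ ≤ ‖G k‖ * (|⟪Vp k, vm k⟫| * ‖g k‖) := by
              apply mul_le_mul_of_nonneg_right ihl
              positivity
          _ ≤ ‖G (k + 1)‖ := hlow
      · calc ‖G (k + 1)‖ ≤
            Real.sqrt (oplus (oplus ((Sg k) ^ 2) (|⟪Vp k, vm k⟫| ^ 2)) ((σ k) ^ 2)) *
              ‖g k‖ * ‖G k‖ := hup
          _ ≤ Real.sqrt (oplus (oplus ((Sg k) ^ 2) (|⟪Vp k, vm k⟫| ^ 2)) ((σ k) ^ 2)) *
              ‖g k‖ * ((∏ i ∈ Finset.Ico 1 k,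
                Real.sqrt (oplus (oplus ((Sg i) ^ 2) (|⟪Vp i, vm i⟫| ^ 2)) ((σ i) ^ 2))) *
                ∏ i ∈ Finset.range k, ‖g i‖) := by
              apply mul_le_mul_of_nonneg_left ihu
              positivity
          _ = ((∏ i ∈ Finset.Ico 1 k,
                Real.sqrt (oplus (oplus ((Sg i) ^ 2) (|⟪Vp i, vm i⟫| ^ 2)) ((σ i) ^ 2))) *
                Real.sqrt (oplus (oplus ((Sg k) ^ 2) (|⟪Vp k, vm k⟫| ^ 2)) ((σ k) ^ 2))) *
              ((∏ i ∈ Finset.range k, ‖g i‖) * ‖g k‖) := by ring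
  obtain ⟨hl, hu⟩ := main n hn le_rfl
  have hprod : 0 < ∏ i ∈ Finset.range n, ‖g i‖ :=
    Finset.prod_pos fun i hi => hgpos i (Finset.mem_range.mp hi)
  constructor
  · rw [le_div_iff₀ hprod]
    exact hl
  · rw [div_le_iff₀ hprod]
    exact hu
end

section
/- If g, g' ∈ GL(m,ℝ) have gaps in their first singular values with ratio bounds ρ(g) > 1/κ and ρ(g') > 1/κ (where ρ(h) = s₁(h)/s₂(h)), and ‖g'g‖/(‖g‖‖g'‖) > ε, then the correlation α(g,g') between the most expanding directions satisfies α(g,g') > ε·√(1 − 2ε²). -/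
open scoped RealInnerProductSpace

set_option maxHeartbeats 800000 in
private lemma alg_bound1 (x y c t U G G' α σ σ' κ : ℝ)
    (hx : 0 ≤ x) (hy : 0 ≤ y) (hc : 0 ≤ c) (hG : 0 ≤ G) (hG' : 0 ≤ G')
    (hα : 0 ≤ α) (hσ : 0 ≤ σ) (hσ' : 0 ≤ σ') (hκ : 0 ≤ κ)
    (hσκ : σ ≤ κ) (hσ'κ : σ' ≤ κ) (hκ1 : κ ≤ 1)
    (hcb : c ≤ σ * G * y)
    (ht : t ^ 2 ≤ (x * G * α + c) ^ 2)
    (hU2 : U ^ 2 = (x * G) ^ 2 + c ^ 2 - t ^ 2) :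
    (t * G') ^ 2 + (σ' * G' * U) ^ 2 ≤ (G * G') ^ 2 * (α + κ) ^ 2 * (x ^ 2 + y ^ 2) := by
  have hσ'1 : σ' ≤ 1 := hσ'κ.trans hκ1
  have hσ'2 : σ' ^ 2 ≤ 1 := pow_le_one₀ hσ' hσ'1
  have hxGα : 0 ≤ x * G * α := by positivity
  have lhs_eq : (t * G') ^ 2 + (σ' * G' * U) ^ 2 =
      G' ^ 2 * (t ^ 2 * (1 - σ' ^ 2) + σ' ^ 2 * ((x * G) ^ 2 + c ^ 2)) := by
    rw [mul_pow (σ' * G') U, mul_pow σ' G', hU2]; ring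
  have stepA : t ^ 2 * (1 - σ' ^ 2) ≤ (x * G * α + c) ^ 2 * (1 - σ' ^ 2) := by
    apply mul_le_mul_of_nonneg_right ht; linarith
  have hcsq : c ^ 2 ≤ (x * G * α + c) ^ 2 := pow_le_pow_left₀ hc (by linarith) 2
  have stepB : (x * G * α + c) ^ 2 * (1 - σ' ^ 2) + σ' ^ 2 * ((x * G) ^ 2 + c ^ 2) ≤
      (x * G * α + c) ^ 2 + σ' ^ 2 * (x * G) ^ 2 := by
    have e : ((x * G * α + c) ^ 2 + σ' ^ 2 * (x * G) ^ 2)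
        - ((x * G * α + c) ^ 2 * (1 - σ' ^ 2) + σ' ^ 2 * ((x * G) ^ 2 + c ^ 2))
        = σ' ^ 2 * ((x * G * α + c) ^ 2 - c ^ 2) := by ring
    have h2 : 0 ≤ σ' ^ 2 * ((x * G * α + c) ^ 2 - c ^ 2) :=
      mul_nonneg (sq_nonneg σ') (sub_nonneg.mpr hcsq)
    linarith
  have hσGy : σ * G * y ≤ κ * G * y :=
    mul_le_mul_of_nonneg_right (mul_le_mul_of_nonneg_right hσκ hG) hy
  have hcκ : c ≤ κ * G * y := hcb.trans hσGy
  have stepC : (x * G * α + c) ^ 2 ≤ (x * G * α + κ * G * y) ^ 2 :=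
    pow_le_pow_left₀ (by positivity) (by linarith) 2
  have hσ'2κ : σ' ^ 2 ≤ κ ^ 2 := pow_le_pow_left₀ hσ' hσ'κ 2
  have stepC' : σ' ^ 2 * (x * G) ^ 2 ≤ κ ^ 2 * (x * G) ^ 2 :=
    mul_le_mul_of_nonneg_right hσ'2κ (sq_nonneg _)
  have hbra : (x * α + κ * y) ^ 2 + κ ^ 2 * x ^ 2 ≤ (α + κ) ^ 2 * (x ^ 2 + y ^ 2) := by
    have e : (α + κ) ^ 2 * (x ^ 2 + y ^ 2) - ((x * α + κ * y) ^ 2 + κ ^ 2 * x ^ 2)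
        = α ^ 2 * y ^ 2 + α * κ * (x - y) ^ 2 + α * κ * x ^ 2 + α * κ * y ^ 2 := by ring
    have h1 : 0 ≤ α * κ * (x - y) ^ 2 := mul_nonneg (mul_nonneg hα hκ) (sq_nonneg _)
    have h2 : 0 ≤ α * κ * x ^ 2 := mul_nonneg (mul_nonneg hα hκ) (sq_nonneg _)
    have h3 : 0 ≤ α * κ * y ^ 2 := mul_nonneg (mul_nonneg hα hκ) (sq_nonneg _)
    have h4 : 0 ≤ α ^ 2 * y ^ 2 := mul_nonneg (sq_nonneg _) (sq_nonneg _)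
    linarith
  have stepD : (x * G * α + κ * G * y) ^ 2 + κ ^ 2 * (x * G) ^ 2 ≤
      G ^ 2 * ((α + κ) ^ 2 * (x ^ 2 + y ^ 2)) := by
    have h := mul_le_mul_of_nonneg_left hbra (sq_nonneg G)
    have e : (x * G * α + κ * G * y) ^ 2 + κ ^ 2 * (x * G) ^ 2 =
        G ^ 2 * ((x * α + κ * y) ^ 2 + κ ^ 2 * x ^ 2) := by ring
    rw [e]; linarith
  rw [lhs_eq]
  have hcore : t ^ 2 * (1 - σ' ^ 2) + σ' ^ 2 * ((x * G) ^ 2 + c ^ 2) ≤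
      G ^ 2 * ((α + κ) ^ 2 * (x ^ 2 + y ^ 2)) := by linarith
  calc G' ^ 2 * (t ^ 2 * (1 - σ' ^ 2) + σ' ^ 2 * ((x * G) ^ 2 + c ^ 2))
      ≤ G' ^ 2 * (G ^ 2 * ((α + κ) ^ 2 * (x ^ 2 + y ^ 2))) :=
        mul_le_mul_of_nonneg_left hcore (sq_nonneg G')
    _ = (G * G') ^ 2 * (α + κ) ^ 2 * (x ^ 2 + y ^ 2) := by ring

set_option maxHeartbeats 800000 in
private lemma alg_bound2 (x y c t U G G' α σ σ' κ : ℝ)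
    (hx : 0 ≤ x) (hy : 0 ≤ y) (hc : 0 ≤ c) (hG : 0 ≤ G) (hG' : 0 ≤ G')
    (hα : 0 ≤ α) (hσ : 0 ≤ σ) (hσ' : 0 ≤ σ') (hκ : 0 ≤ κ)
    (hσκ : σ ≤ κ) (hσ'κ : σ' ≤ κ) (hκ1 : κ ≤ 1)
    (hcb : c ≤ σ * G * y)
    (ht : t ^ 2 ≤ (x * G * α + c) ^ 2)
    (hU2 : U ^ 2 = (x * G) ^ 2 + c ^ 2 - t ^ 2) :
    (t * G') ^ 2 + (σ' * G' * U) ^ 2 ≤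
      (G * G') ^ 2 * (α ^ 2 + 2 * κ ^ 2) * (x ^ 2 + y ^ 2) := by
  have hxGα : 0 ≤ x * G * α := by positivity
  have hσGy : σ * G * y ≤ κ * G * y :=
    mul_le_mul_of_nonneg_right (mul_le_mul_of_nonneg_right hσκ hG) hy
  have hcκ : c ≤ κ * G * y := hcb.trans hσGy
  have ht2 : t ^ 2 ≤ (x * G * α + κ * G * y) ^ 2 :=
    ht.trans (pow_le_pow_left₀ (by positivity) (by linarith) 2)
  have hCS : (x * α + κ * y) ^ 2 ≤ (α ^ 2 + κ ^ 2) * (x ^ 2 + y ^ 2) := by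
    have e : (α ^ 2 + κ ^ 2) * (x ^ 2 + y ^ 2) - (x * α + κ * y) ^ 2
        = (α * y - κ * x) ^ 2 := by ring
    have := sq_nonneg (α * y - κ * x)
    linarith
  have ht3 : t ^ 2 ≤ G ^ 2 * ((α ^ 2 + κ ^ 2) * (x ^ 2 + y ^ 2)) := by
    have h := mul_le_mul_of_nonneg_left hCS (sq_nonneg G)
    have e : (x * G * α + κ * G * y) ^ 2 = G ^ 2 * (x * α + κ * y) ^ 2 := by ring
    rw [e] at ht2; linarith
  have hU3 : U ^ 2 ≤ G ^ 2 * (x ^ 2 + y ^ 2) := by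
    have hc2 : c ^ 2 ≤ (κ * G * y) ^ 2 := pow_le_pow_left₀ hc hcκ 2
    have hκ2 : κ ^ 2 ≤ 1 := pow_le_one₀ hκ hκ1
    have hk : (κ * G * y) ^ 2 ≤ G ^ 2 * y ^ 2 := by
      have h := mul_le_mul_of_nonneg_right hκ2
        (mul_nonneg (sq_nonneg G) (sq_nonneg y))
      have e : (κ * G * y) ^ 2 = κ ^ 2 * (G ^ 2 * y ^ 2) := by ring
      rw [e]; linarith
    have := sq_nonneg t
    linarith [hU2, hc2, hk]
  have hσ'2κ : σ' ^ 2 ≤ κ ^ 2 := pow_le_pow_left₀ hσ' hσ'κ 2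
  have lhs_eq : (t * G') ^ 2 + (σ' * G' * U) ^ 2 =
      G' ^ 2 * t ^ 2 + σ' ^ 2 * G' ^ 2 * U ^ 2 := by ring
  rw [lhs_eq]
  have h1 : G' ^ 2 * t ^ 2 ≤ G' ^ 2 * (G ^ 2 * ((α ^ 2 + κ ^ 2) * (x ^ 2 + y ^ 2))) :=
    mul_le_mul_of_nonneg_left ht3 (sq_nonneg G')
  have h2 : σ' ^ 2 * G' ^ 2 * U ^ 2 ≤ κ ^ 2 * G' ^ 2 * (G ^ 2 * (x ^ 2 + y ^ 2)) := by
    have ha : σ' ^ 2 * G' ^ 2 * U ^ 2 ≤ κ ^ 2 * G' ^ 2 * U ^ 2 := by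
      have := mul_le_mul_of_nonneg_right
        (mul_le_mul_of_nonneg_right hσ'2κ (sq_nonneg G')) (sq_nonneg U)
      linarith
    have hb : κ ^ 2 * G' ^ 2 * U ^ 2 ≤ κ ^ 2 * G' ^ 2 * (G ^ 2 * (x ^ 2 + y ^ 2)) :=
      mul_le_mul_of_nonneg_left hU3 (by positivity)
    linarith
  calc G' ^ 2 * t ^ 2 + σ' ^ 2 * G' ^ 2 * U ^ 2
      ≤ G' ^ 2 * (G ^ 2 * ((α ^ 2 + κ ^ 2) * (x ^ 2 + y ^ 2)))
        + κ ^ 2 * G' ^ 2 * (G ^ 2 * (x ^ 2 + y ^ 2)) := by linarith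
    _ = (G * G') ^ 2 * (α ^ 2 + 2 * κ ^ 2) * (x ^ 2 + y ^ 2) := by ring

set_option maxHeartbeats 1000000 in
/-- If `g, g'` (invertible maps of `ℝ^m`, singular data encoded as below) have singular value
ratio gaps `ρ = s₁/s₂ > 1/κ`, i.e. `σ = s₂/s₁ < κ` (with `κ ≪ ε²`), and if
`‖g'g‖/(‖g‖‖g'‖) > ε`, then the correlation `α(g,g') = |⟪v₊(g), v₋(g')⟫|` between the most
expanding directions satisfies `α(g,g') > ε·√(1 − 2ε²)`. -/
theorem correlation_lower_bound {m : ℕ}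
    (g g' : EuclideanSpace ℝ (Fin m) →L[ℝ] EuclideanSpace ℝ (Fin m))
    (hg_inv : ∃ h, g.comp h = ContinuousLinearMap.id ℝ (EuclideanSpace ℝ (Fin m)) ∧
      h.comp g = ContinuousLinearMap.id ℝ (EuclideanSpace ℝ (Fin m)))
    (hg'_inv : ∃ h, g'.comp h = ContinuousLinearMap.id ℝ (EuclideanSpace ℝ (Fin m)) ∧
      h.comp g' = ContinuousLinearMap.id ℝ (EuclideanSpace ℝ (Fin m)))
    (vm vp vm' vp' : EuclideanSpace ℝ (Fin m)) (σg σg' ε κ : ℝ)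
    (hvm : ‖vm‖ = 1) (hvp : ‖vp‖ = 1) (hvm' : ‖vm'‖ = 1) (hvp' : ‖vp'‖ = 1)
    (hgv : g vm = ‖g‖ • vp) (hg'v : g' vm' = ‖g'‖ • vp')
    (hσg0 : 0 ≤ σg) (hσg'0 : 0 ≤ σg')
    (hsvd : ∀ w, ⟪vm, w⟫ = 0 → ⟪vp, g w⟫ = 0 ∧ ‖g w‖ ≤ σg * ‖g‖ * ‖w‖)
    (hsvd' : ∀ w, ⟪vm', w⟫ = 0 → ⟪vp', g' w⟫ = 0 ∧ ‖g' w‖ ≤ σg' * ‖g'‖ * ‖w‖)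
    (hε : 0 < ε) (hκ0 : 0 ≤ κ) (hκε : κ ≤ ε ^ 2)
    (hσκ : σg < κ) (hσ'κ : σg' < κ)
    (hangle : ε < ‖g'.comp g‖ / (‖g‖ * ‖g'‖)) :
    ε * Real.sqrt (1 - 2 * ε ^ 2) < |⟪vp, vm'⟫| := by
  set α := |⟪vp, vm'⟫| with hαdef
  have hα0 : 0 ≤ α := abs_nonneg _
  have hG0 : 0 < ‖g‖ := by
    rcases hg_inv with ⟨h, -, h2⟩
    rcases (norm_nonneg g).lt_or_eq with h' | h'
    · exact h'
    · exfalso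
      have hg0 : g = 0 := by rwa [eq_comm, norm_eq_zero] at h'
      have : vm = 0 := by
        have := congrArg (fun f => f vm) h2
        simpa [hg0] using this.symm
      rw [this] at hvm; simp at hvm
  have hG'0 : 0 < ‖g'‖ := by
    rcases hg'_inv with ⟨h, -, h2⟩
    rcases (norm_nonneg g').lt_or_eq with h' | h'
    · exact h'
    · exfalso
      have hg0 : g' = 0 := by rwa [eq_comm, norm_eq_zero] at h'
      have : vm' = 0 := by
        have := congrArg (fun f => f vm') h2
        simpa [hg0] using this.symm
      rw [this] at hvm'; simp at hvm'
  have hGG' : 0 < ‖g‖ * ‖g'‖ := mul_pos hG0 hG'0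
  have hε1 : ε < 1 := by
    have h1 : ‖g'.comp g‖ / (‖g‖ * ‖g'‖) ≤ 1 := by
      rw [div_le_one hGG']
      calc ‖g'.comp g‖ ≤ ‖g'‖ * ‖g‖ := ContinuousLinearMap.opNorm_comp_le g' g
        _ = ‖g‖ * ‖g'‖ := mul_comm _ _
    exact lt_of_lt_of_le hangle h1
  have hε2 : ε ^ 2 < 1 := by nlinarith
  have hκ1 : κ ≤ 1 := hκε.trans hε2.le
  -- Key pointwise bounds
  have key : ∀ w : EuclideanSpace ℝ (Fin m),
      ‖g' (g w)‖ ^ 2 ≤ (‖g‖ * ‖g'‖) ^ 2 * ((α + κ) ^ 2) * ‖w‖ ^ 2 ∧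
      ‖g' (g w)‖ ^ 2 ≤ (‖g‖ * ‖g'‖) ^ 2 * (α ^ 2 + 2 * κ ^ 2) * ‖w‖ ^ 2 := by
    intro w
    set a := ⟪vm, w⟫ with ha
    set wp := w - a • vm with hwp
    have hvmvm : ⟪vm, vm⟫ = 1 := by rw [real_inner_self_eq_norm_sq, hvm]; norm_num
    have hperp0 : ⟪vm, wp⟫ = 0 := by
      rw [hwp, inner_sub_right, real_inner_smul_right, hvmvm]; ring
    have hw_dec : w = a • vm + wp := by rw [hwp]; abel
    have hw_sq : ‖w‖ ^ 2 = a ^ 2 + ‖wp‖ ^ 2 := by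
      conv_lhs => rw [hw_dec]
      rw [norm_add_sq_real, real_inner_smul_left, hperp0, norm_smul,
        Real.norm_eq_abs, hvm, mul_one, sq_abs]
      ring
    obtain ⟨hperp1, hperp2⟩ := hsvd wp hperp0
    have hgw_dec : g w = (a * ‖g‖) • vp + g wp := by
      conv_lhs => rw [hw_dec]
      rw [map_add, map_smul, hgv, smul_smul]
    have hu_sq : ‖g w‖ ^ 2 = (a * ‖g‖) ^ 2 + ‖g wp‖ ^ 2 := by
      conv_lhs => rw [hgw_dec]
      rw [norm_add_sq_real, real_inner_smul_left, hperp1, norm_smul,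
        Real.norm_eq_abs, hvp, mul_one, sq_abs]
      ring
    set t := ⟪vm', g w⟫ with htdef
    have hvm'vm' : ⟪vm', vm'⟫ = 1 := by rw [real_inner_self_eq_norm_sq, hvm']; norm_num
    set up := g w - t • vm' with hup
    have hperp0' : ⟪vm', up⟫ = 0 := by
      rw [hup, inner_sub_right, real_inner_smul_right, hvm'vm']; ring
    have hu_dec : g w = t • vm' + up := by rw [hup]; abel
    have hu_sq2 : ‖g w‖ ^ 2 = t ^ 2 + ‖up‖ ^ 2 := by
      conv_lhs => rw [hu_dec]
      rw [norm_add_sq_real, real_inner_smul_left, hperp0', norm_smul,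
        Real.norm_eq_abs, hvm', mul_one, sq_abs]
      ring
    obtain ⟨hperp1', hperp2'⟩ := hsvd' up hperp0'
    have hg'u_dec : g' (g w) = (t * ‖g'‖) • vp' + g' up := by
      conv_lhs => rw [hu_dec]
      rw [map_add, map_smul, hg'v, smul_smul]
    have hfin_sq : ‖g' (g w)‖ ^ 2 = (t * ‖g'‖) ^ 2 + ‖g' up‖ ^ 2 := by
      conv_lhs => rw [hg'u_dec]
      rw [norm_add_sq_real, real_inner_smul_left, hperp1', norm_smul,
        Real.norm_eq_abs, hvp', mul_one, sq_abs]
      ring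
    have ht_eq : t = a * ‖g‖ * ⟪vm', vp⟫ + ⟪vm', g wp⟫ := by
      rw [htdef, hgw_dec, inner_add_right, real_inner_smul_right]
    have hα_comm : |⟪vm', vp⟫| = α := by rw [hαdef, real_inner_comm]
    have ht_bound : |t| ≤ |a| * ‖g‖ * α + ‖g wp‖ := by
      rw [ht_eq]
      calc |a * ‖g‖ * ⟪vm', vp⟫ + ⟪vm', g wp⟫|
          ≤ |a * ‖g‖ * ⟪vm', vp⟫| + |⟪vm', g wp⟫| := abs_add_le _ _
        _ ≤ |a| * ‖g‖ * α + ‖g wp‖ := by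
            gcongr
            · rw [abs_mul, abs_mul, abs_of_nonneg (norm_nonneg g), hα_comm]
            · calc |⟪vm', g wp⟫| ≤ ‖vm'‖ * ‖g wp‖ := abs_real_inner_le_norm _ _
                _ = ‖g wp‖ := by rw [hvm', one_mul]
    have ht2 : t ^ 2 ≤ (|a| * ‖g‖ * α + ‖g wp‖) ^ 2 := by
      rw [← sq_abs t]
      exact pow_le_pow_left₀ (abs_nonneg t) ht_bound 2
    have hUt : ‖up‖ ^ 2 = (|a| * ‖g‖) ^ 2 + ‖g wp‖ ^ 2 - t ^ 2 := by
      have e : (|a| * ‖g‖) ^ 2 = (a * ‖g‖) ^ 2 := by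
        rw [mul_pow, mul_pow, sq_abs]
      rw [e]
      have := hu_sq2
      rw [hu_sq] at this
      linarith
    have hg'up : ‖g' up‖ ≤ σg' * ‖g'‖ * ‖up‖ := hperp2'
    have hg'up2 : ‖g' up‖ ^ 2 ≤ (σg' * ‖g'‖ * ‖up‖) ^ 2 :=
      pow_le_pow_left₀ (norm_nonneg _) hg'up 2
    have hb1 := alg_bound1 (|a|) (‖wp‖) (‖g wp‖) t (‖up‖) (‖g‖) (‖g'‖) α σg σg' κ
      (abs_nonneg a) (norm_nonneg wp) (norm_nonneg _) hG0.le hG'0.le hα0 hσg0 hσg'0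
      hκ0 hσκ.le hσ'κ.le hκ1 hperp2 ht2 hUt
    have hb2 := alg_bound2 (|a|) (‖wp‖) (‖g wp‖) t (‖up‖) (‖g‖) (‖g'‖) α σg σg' κ
      (abs_nonneg a) (norm_nonneg wp) (norm_nonneg _) hG0.le hG'0.le hα0 hσg0 hσg'0
      hκ0 hσκ.le hσ'κ.le hκ1 hperp2 ht2 hUt
    have hwx : |a| ^ 2 + ‖wp‖ ^ 2 = ‖w‖ ^ 2 := by rw [hw_sq, sq_abs]
    rw [hwx] at hb1 hb2
    constructor
    · rw [hfin_sq]
      calc (t * ‖g'‖) ^ 2 + ‖g' up‖ ^ 2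
          ≤ (t * ‖g'‖) ^ 2 + (σg' * ‖g'‖ * ‖up‖) ^ 2 := by linarith
        _ ≤ (‖g‖ * ‖g'‖) ^ 2 * (α + κ) ^ 2 * ‖w‖ ^ 2 := hb1
    · rw [hfin_sq]
      calc (t * ‖g'‖) ^ 2 + ‖g' up‖ ^ 2
          ≤ (t * ‖g'‖) ^ 2 + (σg' * ‖g'‖ * ‖up‖) ^ 2 := by linarith
        _ ≤ (‖g‖ * ‖g'‖) ^ 2 * (α ^ 2 + 2 * κ ^ 2) * ‖w‖ ^ 2 := hb2
  -- operator-norm consequences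
  have opbound : ∀ C : ℝ, 0 ≤ C →
      (∀ w : EuclideanSpace ℝ (Fin m),
        ‖g' (g w)‖ ^ 2 ≤ (‖g‖ * ‖g'‖) ^ 2 * C ^ 2 * ‖w‖ ^ 2) →
      ε < C := by
    intro C hC hw
    have hop : ‖g'.comp g‖ ≤ ‖g‖ * ‖g'‖ * C := by
      apply ContinuousLinearMap.opNorm_le_bound _ (by positivity)
      intro w
      have h1 := hw w
      have h2 : ‖g' (g w)‖ ≤ ‖g‖ * ‖g'‖ * C * ‖w‖ := by
        have hb : (0:ℝ) ≤ ‖g‖ * ‖g'‖ * C * ‖w‖ := by positivity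
        have e : ((‖g‖ * ‖g'‖) * C * ‖w‖) ^ 2 = (‖g‖ * ‖g'‖) ^ 2 * C ^ 2 * ‖w‖ ^ 2 := by
          ring
        have h3 : ‖g' (g w)‖ ^ 2 ≤ (‖g‖ * ‖g'‖ * C * ‖w‖) ^ 2 := by rw [e]; exact h1
        have h4 := Real.sqrt_le_sqrt h3
        rwa [Real.sqrt_sq (norm_nonneg _), Real.sqrt_sq hb] at h4
      rw [ContinuousLinearMap.comp_apply]
      exact h2
    have hle : ‖g'.comp g‖ / (‖g‖ * ‖g'‖) ≤ C := by
      rw [div_le_iff₀ hGG']; linarith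
    linarith
  have bound1 : ε < α + κ := by
    refine opbound (α + κ) (by positivity) (fun w => ?_)
    exact (key w).1
  have bound2 : ε ^ 2 < α ^ 2 + 2 * κ ^ 2 := by
    have h := opbound (Real.sqrt (α ^ 2 + 2 * κ ^ 2)) (Real.sqrt_nonneg _) (fun w => ?_)
    · have := (Real.lt_sqrt hε.le).mp h
      linarith
    · rw [Real.sq_sqrt (by positivity)]
      exact (key w).2
  rcases le_or_gt 1 (2 * ε ^ 2) with hcase | hcase
  · have hz : Real.sqrt (1 - 2 * ε ^ 2) = 0 := by
      apply Real.sqrt_eq_zero_of_nonpos; linarith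
    rw [hz, mul_zero]
    nlinarith
  · have hκ2 : κ ^ 2 ≤ ε ^ 4 := by nlinarith
    have hsq : (ε * Real.sqrt (1 - 2 * ε ^ 2)) ^ 2 < α ^ 2 := by
      rw [mul_pow, Real.sq_sqrt (by linarith)]
      nlinarith
    exact lt_of_pow_lt_pow_left₀ 2 hα0 hsq
end

section
/- For matrices g, g' ∈ GL(m,ℝ) with τ-gap patterns and α_τ(g,g') > 0, one has 1 ≤ β_τ(g,g')/α_τ(g,g') ≤ √(1 + (σ(g)² ⊕ σ(g')²)/α_τ(g,g')²). -/
/-- For matrices `g, g'` with `τ`-gap patterns, let `α = α_τ(g,g') ∈ (0,1]` denote the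
correlation between the most expanding `τ`-flags, let `σg = σ_τ(g), σg' = σ_τ(g') ∈ [0,1]`
be the maximal `τ`-singular-value ratios, and set `β = β_τ(g,g') = √(σg² ⊕ α² ⊕ σg'²)`.
Then `1 ≤ β/α ≤ √(1 + (σg² ⊕ σg'²)/α²)`. -/
theorem alpha_beta_bound (σg σg' α : ℝ)
    (hσg : σg ∈ Set.Icc (0:ℝ) 1) (hσg' : σg' ∈ Set.Icc (0:ℝ) 1)
    (hα : α ∈ Set.Icc (0:ℝ) 1) (hα0 : 0 < α) :
    1 ≤ Real.sqrt (oplus (oplus (σg ^ 2) (α ^ 2)) (σg' ^ 2)) / α ∧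
    Real.sqrt (oplus (oplus (σg ^ 2) (α ^ 2)) (σg' ^ 2)) / α ≤
      Real.sqrt (1 + oplus (σg ^ 2) (σg' ^ 2) / α ^ 2) := by
  obtain ⟨ha0, ha1⟩ := hσg
  obtain ⟨hb0, hb1⟩ := hσg'
  obtain ⟨_, hα1⟩ := hα
  set S := oplus (oplus (σg ^ 2) (α ^ 2)) (σg' ^ 2) with hS
  have key1 : α ^ 2 ≤ S := by
    simp only [hS, oplus]
    nlinarith [mul_nonneg (sq_nonneg σg) (sub_nonneg.2 (show α ^ 2 ≤ 1 by nlinarith)),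
      mul_nonneg (mul_nonneg (sq_nonneg σg') (sub_nonneg.2 (show σg ^ 2 ≤ 1 by nlinarith)))
        (sub_nonneg.2 (show α ^ 2 ≤ 1 by nlinarith))]
  have key2 : S ≤ α ^ 2 + oplus (σg ^ 2) (σg' ^ 2) := by
    simp only [hS, oplus]
    nlinarith [mul_nonneg (sq_nonneg α)
      (show (0:ℝ) ≤ σg ^ 2 + σg' ^ 2 - σg ^ 2 * σg' ^ 2 by
        nlinarith [mul_nonneg (sq_nonneg σg) (sub_nonneg.2 (show σg' ^ 2 ≤ 1 by nlinarith))])]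
  have hαS : α ≤ Real.sqrt S := by
    rw [show α = Real.sqrt (α ^ 2) by rw [Real.sqrt_sq hα0.le]]
    exact Real.sqrt_le_sqrt key1
  constructor
  · rw [le_div_iff₀ hα0, one_mul]; exact hαS
  · rw [div_le_iff₀ hα0]
    have hX : (0:ℝ) ≤ oplus (σg ^ 2) (σg' ^ 2) := by
      simp only [oplus]
      nlinarith [mul_nonneg (sq_nonneg σg) (sub_nonneg.2 (show σg' ^ 2 ≤ 1 by nlinarith))]
    have heq : (1 + oplus (σg ^ 2) (σg' ^ 2) / α ^ 2) * α ^ 2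
        = α ^ 2 + oplus (σg ^ 2) (σg' ^ 2) := by field_simp
    have h := Real.sqrt_le_sqrt (heq ▸ key2 :
      S ≤ (1 + oplus (σg ^ 2) (σg' ^ 2) / α ^ 2) * α ^ 2)
    rwa [Real.sqrt_mul (by positivity), Real.sqrt_sq hα0.le] at h
end

section
/- Shadowing Lemma: Let X be a compact metric space of diameter 1, let 0 < κ < 1, δ < κ, and δ/(1−κ) < ε < 1/2. Suppose g₀,…,g_{n−1}: X → X are continuous maps, Σ₀,…,Σ_{n−1} ⊂ X closed sets, and (x_i, y_i) pairs with: g_i(x_i) = y_i; d(x_i, Σ_i) = 1 and d(y_i, Σ_{i+1}) ≥ 2ε; g_i restricted to X ∖ B_ε(Σ_i) is κ-Lipschitz; and g_i(X ∖ B_ε(Σ_i)) ⊂ B_δ(y_i). Then d(y_{n−1}, g^{(n)}(x₀)) ≤ δ/(1−κ), where g^{(n)} = g_{n−1}∘…∘g₀. -/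
/-- **Shadowing Lemma.** Let `X` be a compact metric space with diameter `1`, let
`0 < κ < 1`, `0 < δ < κ` and `δ/(1−κ) < ε < 1/2`.  Given continuous maps
`g₀, …, g_{n−1} : X → X`, closed sets `Σ₀, …, Σ_{n−1} ⊆ X` and pairs `(x_i, y_i)` with
`g_i(x_i) = y_i`, `d(x_i, Σ_i) = 1`, `d(y_i, Σ_{i+1}) ≥ 2ε` (for `i+1 < n`), such that each
`g_i` is `κ`-Lipschitz outside the `ε`-neighborhood `B_ε(Σ_i)` and maps `X ∖ B_ε(Σ_i)` into
the `δ`-ball around `y_i`, the orbit `z₀ = x₀, z_{i+1} = g_i(z_i)` of the mapping chain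
satisfies `d(y_{n−1}, g^{(n)}(x₀)) ≤ δ/(1−κ)`. -/
theorem shadowing_lemma {X : Type*} [MetricSpace X] [CompactSpace X]
    (hdiam : Metric.diam (Set.univ : Set X) = 1)
    (n : ℕ) (hn : 1 ≤ n) (ε δ κ : ℝ)
    (hκ0 : 0 < κ) (hκ1 : κ < 1) (hδ0 : 0 < δ) (hδκ : δ < κ)
    (hεl : δ / (1 - κ) < ε) (hεu : ε < 1 / 2)
    (g : ℕ → X → X) (S : ℕ → Set X) (x y : ℕ → X)
    (hgc : ∀ i < n, Continuous (g i))
    (hSc : ∀ i < n, IsClosed (S i))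
    (hgxy : ∀ i < n, g i (x i) = y i)
    (hxS : ∀ i < n, Metric.infDist (x i) (S i) = 1)
    (hyS : ∀ i, i + 1 < n → 2 * ε ≤ Metric.infDist (y i) (S (i + 1)))
    (hLip : ∀ i < n, ∀ p q : X, ε ≤ Metric.infDist p (S i) → ε ≤ Metric.infDist q (S i) →
      dist (g i p) (g i q) ≤ κ * dist p q)
    (hball : ∀ i < n, ∀ p : X, ε ≤ Metric.infDist p (S i) → dist (g i p) (y i) < δ)
    (z : ℕ → X) (hz0 : z 0 = x 0) (hzS : ∀ i, z (i + 1) = g i (z i)) :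
    dist (y (n - 1)) (z n) ≤ δ / (1 - κ) := by
  have h1κ : 0 < 1 - κ := by linarith
  have hδε : δ < ε := by
    have : δ < δ / (1 - κ) := by
      rw [lt_div_iff₀ h1κ]; nlinarith
    linarith
  have key : ∀ i, i < n → ε ≤ Metric.infDist (z i) (S i) := by
    intro i
    induction i with
    | zero => intro _; rw [hz0, hxS 0 (by omega)]; linarith
    | succ i ih =>
      intro hi
      have hi' : i < n := by omega
      have hzi := ih hi'
      have hb := hball i hi' (z i) hzi
      have hy := hyS i hi
      have htri := Metric.infDist_le_infDist_add_dist (x := y i) (y := z (i + 1))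
        (s := S (i + 1))
      rw [hzS i, dist_comm] at htri
      rw [hzS i]
      linarith
  have hlast : n - 1 < n := by omega
  have hb := hball (n - 1) hlast (z (n - 1)) (key (n - 1) hlast)
  have hzn : z n = g (n - 1) (z (n - 1)) := by
    have h : n - 1 + 1 = n := by omega
    have := hzS (n - 1)
    rw [h] at this
    exact this
  rw [hzn, dist_comm]
  have hδle : δ ≤ δ / (1 - κ) := le_of_lt (by rw [lt_div_iff₀ h1κ]; nlinarith)
  linarith
end

section
/- Shadowing Lemma, periodic case: under the hypotheses of the shadowing lemma, if additionally x₀ = y_{n−1}, then there is a unique fixed point x* of g^{(n)} = g_{n−1}∘…∘g₀ in the closed ball of radius ε about x₀, and d(x₀, x*) ≤ δ/((1−κ)(1−κⁿ)). -/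
/-- **Shadowing Lemma, periodic case.** Under the hypotheses of the shadowing lemma, if
moreover `x₀ = y_{n−1}` (the pseudo-orbit is closed), then the composition
`g^{(n)} = g_{n−1} ∘ … ∘ g₀` (encoded by `orb p i`, the orbit of a point `p` along the
mapping chain) has a unique fixed point `x*` in the closed `ε`-ball around `x₀`, and
`d(x₀, x*) ≤ δ/((1−κ)(1−κⁿ))`. -/
theorem shadowing_lemma_periodic {X : Type*} [MetricSpace X] [CompactSpace X]
    (hdiam : Metric.diam (Set.univ : Set X) = 1)
    (n : ℕ) (hn : 1 ≤ n) (ε δ κ : ℝ)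
    (hκ0 : 0 < κ) (hκ1 : κ < 1) (hδ0 : 0 < δ) (hδκ : δ < κ)
    (hεl : δ / (1 - κ) < ε) (hεu : ε < 1 / 2)
    (g : ℕ → X → X) (S : ℕ → Set X) (x y : ℕ → X)
    (hgc : ∀ i < n, Continuous (g i))
    (hSc : ∀ i < n, IsClosed (S i))
    (hgxy : ∀ i < n, g i (x i) = y i)
    (hxS : ∀ i < n, Metric.infDist (x i) (S i) = 1)
    (hyS : ∀ i, i + 1 < n → 2 * ε ≤ Metric.infDist (y i) (S (i + 1)))
    (hLip : ∀ i < n, ∀ p q : X, ε ≤ Metric.infDist p (S i) → ε ≤ Metric.infDist q (S i) →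
      dist (g i p) (g i q) ≤ κ * dist p q)
    (hball : ∀ i < n, ∀ p : X, ε ≤ Metric.infDist p (S i) → dist (g i p) (y i) < δ)
    (orb : X → ℕ → X) (horb0 : ∀ p, orb p 0 = p)
    (horbS : ∀ p i, orb p (i + 1) = g i (orb p i))
    (hper : x 0 = y (n - 1)) :
    ∃ xs : X, (orb xs n = xs ∧ xs ∈ Metric.closedBall (x 0) ε ∧
        dist (x 0) xs ≤ δ / ((1 - κ) * (1 - κ ^ n))) ∧
      ∀ p : X, orb p n = p → p ∈ Metric.closedBall (x 0) ε → p = xs := by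
  have h1κ : (0:ℝ) < 1 - κ := by linarith
  have hκn1 : κ ^ n < 1 := pow_lt_one₀ hκ0.le hκ1 (by omega)
  have h1κn : (0:ℝ) < 1 - κ ^ n := by linarith
  have hκnpos : (0:ℝ) < κ ^ n := pow_pos hκ0 n
  have hε0 : (0:ℝ) < ε := lt_trans (div_pos hδ0 h1κ) hεl
  have hδε : δ < ε := by
    have := (div_lt_iff₀ h1κ).mp hεl
    nlinarith
  -- key invariance lemma
  have key : ∀ p : X, dist p (x 0) ≤ ε → ∀ i, i < n →
      ε ≤ Metric.infDist (orb p i) (S i) := by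
    intro p hp i
    induction i with
    | zero =>
      intro _
      rw [horb0]
      have h := Metric.infDist_le_infDist_add_dist (x := x 0) (y := p) (s := S 0)
      rw [hxS 0 (by omega)] at h
      rw [dist_comm] at hp
      linarith
    | succ i ih =>
      intro hsn
      have hin : i < n := by omega
      have hio := ih hin
      have hb := hball i hin (orb p i) hio
      rw [← horbS] at hb
      have h2 := hyS i hsn
      have h := Metric.infDist_le_infDist_add_dist (x := y i) (y := orb p (i+1)) (s := S (i+1))
      rw [dist_comm] at h
      linarith
  -- contraction lemma
  have contr : ∀ p q : X, dist p (x 0) ≤ ε → dist q (x 0) ≤ ε → ∀ i, i ≤ n →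
      dist (orb p i) (orb q i) ≤ κ ^ i * dist p q := by
    intro p q hp hq i
    induction i with
    | zero => intro _; simp [horb0]
    | succ i ih =>
      intro hsn
      have hin : i < n := by omega
      have h1 := hLip i hin (orb p i) (orb q i) (key p hp i hin) (key q hq i hin)
      have h2 := ih (by omega)
      have hd : (0:ℝ) ≤ dist p q := dist_nonneg
      rw [horbS, horbS]
      calc dist (g i (orb p i)) (g i (orb q i)) ≤ κ * dist (orb p i) (orb q i) := h1
        _ ≤ κ * (κ ^ i * dist p q) := by nlinarith
        _ = κ ^ (i+1) * dist p q := by ring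
  -- the n-th orbit point lands in the δ-ball around x 0
  have into : ∀ p : X, dist p (x 0) ≤ ε → dist (orb p n) (x 0) ≤ δ := by
    intro p hp
    have hn1 : n - 1 < n := by omega
    have hb := hball (n-1) hn1 (orb p (n-1)) (key p hp (n-1) hn1)
    have hne : n - 1 + 1 = n := by omega
    rw [← horbS, hne] at hb
    rw [hper]
    exact hb.le
  have hx0B : dist (x 0) (x 0) ≤ ε := by simp [hε0.le]
  -- fixed point via Banach on the closed ball
  set B := Metric.closedBall (x 0) ε with hB
  haveI : Nonempty B := ⟨⟨x 0, Metric.mem_closedBall.mpr hx0B⟩⟩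
  haveI : CompleteSpace B := (Metric.isClosed_closedBall).completeSpace_coe
  set K : NNReal := ⟨κ, hκ0.le⟩ ^ n with hK
  have hKcoe : (K : ℝ) = κ ^ n := by push_cast [hK]; rfl
  set f : B → B := fun p => ⟨orb p.1 n, by
    have := into p.1 (Metric.mem_closedBall.mp p.2)
    show orb p.1 n ∈ Metric.closedBall (x 0) ε
    rw [Metric.mem_closedBall]
    linarith⟩ with hf
  have hfl : LipschitzWith K f := by
    apply LipschitzWith.of_dist_le_mul
    intro a b
    rw [Subtype.dist_eq, hKcoe]
    exact contr a.1 b.1 (Metric.mem_closedBall.mp a.2)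
      (Metric.mem_closedBall.mp b.2) n le_rfl
  have hcw : ContractingWith K f := ⟨by rw [← NNReal.coe_lt_one, hKcoe]; exact hκn1, hfl⟩
  set xs : B := hcw.fixedPoint f with hxs
  have hfix : f xs = xs := hcw.fixedPoint_isFixedPt
  have horbfix : orb xs.1 n = xs.1 := congrArg Subtype.val hfix
  have hxsB : dist xs.1 (x 0) ≤ ε := Metric.mem_closedBall.mp xs.2
  refine ⟨xs.1, ⟨horbfix, Metric.mem_closedBall.mpr hxsB, ?_⟩, ?_⟩
  · -- distance bound
    have h1 : dist (x 0) xs.1 ≤ dist (x 0) (orb (x 0) n) + dist (orb (x 0) n) (orb xs.1 n) :=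
      by rw [horbfix]; exact dist_triangle _ _ _
    have h2 := contr (x 0) xs.1 hx0B hxsB n le_rfl
    have h3 := into (x 0) hx0B
    rw [dist_comm] at h3
    have hd : dist (x 0) xs.1 ≤ δ / (1 - κ ^ n) := by
      rw [le_div_iff₀ h1κn]
      nlinarith
    have hle : δ / (1 - κ ^ n) ≤ δ / ((1 - κ) * (1 - κ ^ n)) := by
      apply div_le_div_of_nonneg_left hδ0.le (by positivity)
      nlinarith
    linarith
  · -- uniqueness
    intro p hpfix hpB
    have hpB' : dist p (x 0) ≤ ε := Metric.mem_closedBall.mp hpB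
    have h := contr p xs.1 hpB' hxsB n le_rfl
    rw [hpfix, horbfix] at h
    have hd0 : dist p xs.1 = 0 := by nlinarith [dist_nonneg (x := p) (y := xs.1)]
    exact dist_eq_zero.mp hd0
end

section
/- Let g ∈ GL(m,ℝ) with s₁(g) > s₂(g), let v₊ be the top singular output direction, and let x ∈ ℝ^m be a unit vector with |⟨x, v₋(g)⟩| ≥ ε > 0. Then ‖g·x‖ ≥ ε‖g‖, and the projective distance from g·x/‖g·x‖ to v₊(g) is at most (s₂(g)/s₁(g))·√(1−ε²)/ε ≤ σ(g)/ε. -/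
open scoped RealInnerProductSpace

/-- Purely scalar form of the angle estimate. -/
lemma aux_arccos_bound (σg ε a G W N s : ℝ) (hε : 0 < ε) (ha : ε ≤ a) (hG : 0 < G)
    (hN : 0 < N) (hσ0 : 0 ≤ σg) (hW : 0 ≤ W) (hs : 0 ≤ s)
    (hNsq : N ^ 2 = a ^ 2 * G ^ 2 + W ^ 2) (hWle : W ≤ σg * G * s)
    (has : a ^ 2 + s ^ 2 = 1) :
    Real.arccos (N⁻¹ * (a * G)) ≤ σg * Real.sqrt (1 - ε ^ 2) / ε := by
  have ha0 : 0 < a := lt_of_lt_of_le hε ha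
  have ha1 : a ≤ 1 := by nlinarith [sq_nonneg s]
  have hε1 : ε ≤ 1 := le_trans ha ha1
  have hεsq : 0 ≤ 1 - ε ^ 2 := by nlinarith
  have hRHS : 0 ≤ σg * Real.sqrt (1 - ε ^ 2) / ε := by positivity
  set t := N⁻¹ * (a * G) with htdef
  have ht0 : 0 < t := by positivity
  rcases (Real.arccos_nonneg t).lt_or_eq with harc | harc
  swap
  · rw [← harc]; exact hRHS
  have htan := Real.lt_tan harc (Real.arccos_lt_pi_div_two.2 ht0)
  rw [Real.tan_arccos] at htan
  refine le_trans htan.le ?_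
  have hNne : N ≠ 0 := hN.ne'
  have hN2 : N ^ 2 ≠ 0 := pow_ne_zero 2 hNne
  have ht2 : 1 - t ^ 2 = (W / N) ^ 2 := by
    have h7 : t ^ 2 = a ^ 2 * G ^ 2 / N ^ 2 := by
      rw [htdef]; field_simp
    rw [h7, div_pow, eq_div_iff hN2, sub_mul, div_mul_cancel₀ _ hN2, one_mul]
    linarith
  rw [ht2, Real.sqrt_sq (by positivity)]
  have heq : W / N / t = W / (a * G) := by
    rw [htdef, div_div, ← mul_assoc, mul_inv_cancel₀ hNne, one_mul]
  rw [heq]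
  have hε2a : ε ^ 2 ≤ a ^ 2 := by nlinarith
  have hwε : s * ε ≤ Real.sqrt (1 - ε ^ 2) * a := by
    have hsq2 : (s * ε) ^ 2 ≤ (Real.sqrt (1 - ε ^ 2) * a) ^ 2 := by
      rw [mul_pow, mul_pow, Real.sq_sqrt hεsq]
      nlinarith
    have h3 := Real.sqrt_le_sqrt hsq2
    rwa [Real.sqrt_sq (by positivity), Real.sqrt_sq (by positivity)] at h3
  rw [div_le_div_iff₀ (by positivity) hε]
  nlinarith [mul_le_mul_of_nonneg_right hWle hε.le,
    mul_le_mul_of_nonneg_left hwε (mul_nonneg hσ0 hG.le)]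

/-- Let `g` be an invertible linear map of `ℝ^m` with `s₁(g) > s₂(g)`; its singular data is
encoded by unit vectors `v₋, v₊` with `g v₋ = ‖g‖ v₊` and `σ(g) = s₂(g)/s₁(g) ∈ [0,1)`.
If `x` is a unit vector with `|⟪x, v₋⟫| ≥ ε > 0`, then `‖g x‖ ≥ ε ‖g‖`, and the projective
(angle) distance from `g x / ‖g x‖` to `v₊` is at most `σ(g)·√(1−ε²)/ε ≤ σ(g)/ε`. -/
theorem projective_image_close_to_top_direction {m : ℕ}
    (g : EuclideanSpace ℝ (Fin m) →L[ℝ] EuclideanSpace ℝ (Fin m))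
    (hg_inv : ∃ h, g.comp h = ContinuousLinearMap.id ℝ (EuclideanSpace ℝ (Fin m)) ∧
      h.comp g = ContinuousLinearMap.id ℝ (EuclideanSpace ℝ (Fin m)))
    (vm vp : EuclideanSpace ℝ (Fin m)) (σg : ℝ)
    (hvm : ‖vm‖ = 1) (hvp : ‖vp‖ = 1)
    (hgv : g vm = ‖g‖ • vp)
    (hσ0 : 0 ≤ σg) (hσ1 : σg < 1)
    (hsvd : ∀ w, ⟪vm, w⟫ = 0 → ⟪vp, g w⟫ = 0 ∧ ‖g w‖ ≤ σg * ‖g‖ * ‖w‖)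
    (x : EuclideanSpace ℝ (Fin m)) (hx : ‖x‖ = 1)
    (ε : ℝ) (hε : 0 < ε) (hcorr : ε ≤ |⟪x, vm⟫|) :
    ε * ‖g‖ ≤ ‖g x‖ ∧
    Real.arccos |⟪(‖g x‖)⁻¹ • g x, vp⟫| ≤ σg * Real.sqrt (1 - ε ^ 2) / ε ∧
    σg * Real.sqrt (1 - ε ^ 2) / ε ≤ σg / ε := by
  have hrun : ∀ a b : EuclideanSpace ℝ (Fin m), ⟪a, b⟫ = ⟪b, a⟫ :=
    fun a b => real_inner_comm b a
  set c : ℝ := ⟪vm, x⟫ with hcdef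
  have hxc : |c| = |⟪x, vm⟫| := by rw [hcdef, hrun]
  have hcε : ε ≤ |c| := hxc ▸ hcorr
  have hc0 : 0 < |c| := lt_of_lt_of_le hε hcε
  -- decomposition
  set w : EuclideanSpace ℝ (Fin m) := x - c • vm with hwdef
  have hvmvm : ⟪vm, vm⟫ = 1 := by
    rw [real_inner_self_eq_norm_sq, hvm]; norm_num
  have hvpvp : ⟪vp, vp⟫ = 1 := by
    rw [real_inner_self_eq_norm_sq, hvp]; norm_num
  have hworth : ⟪vm, w⟫ = 0 := by
    rw [hwdef, inner_sub_right, real_inner_smul_right, hvmvm]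
    simp [hcdef]
  obtain ⟨hgw_orth, hgw_le⟩ := hsvd w hworth
  have hxdecomp : x = c • vm + w := by rw [hwdef]; abel
  have hgx : g x = (c * ‖g‖) • vp + g w := by
    rw [hxdecomp, map_add, map_smul, hgv, smul_smul]
  -- Pythagoras for x
  have hwnorm : c ^ 2 + ‖w‖ ^ 2 = 1 := by
    have horth : ⟪c • vm, w⟫ = 0 := by rw [real_inner_smul_left, hworth]; ring
    have h5 := norm_add_sq_eq_norm_sq_add_norm_sq_real horth
    rw [← hxdecomp, hx, norm_smul, Real.norm_eq_abs, hvm] at h5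
    have e1 : |c| * 1 * (|c| * 1) = c ^ 2 := by rw [mul_one, ← sq_abs]; ring
    rw [e1, ← pow_two ‖w‖] at h5
    linarith
  -- Pythagoras for g x
  have hgxorth : ⟪(c * ‖g‖) • vp, g w⟫ = 0 := by
    rw [real_inner_smul_left, hgw_orth]; ring
  have hgxnorm : ‖g x‖ ^ 2 = c ^ 2 * ‖g‖ ^ 2 + ‖g w‖ ^ 2 := by
    have h5 := norm_add_sq_eq_norm_sq_add_norm_sq_real hgxorth
    rw [← hgx, norm_smul, Real.norm_eq_abs, hvp] at h5
    have e1 : |c * ‖g‖| * 1 * (|c * ‖g‖| * 1) = c ^ 2 * ‖g‖ ^ 2 := by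
      rw [mul_one, abs_mul, abs_of_nonneg (norm_nonneg g), ← sq_abs c]; ring
    rw [e1, ← pow_two ‖g w‖, ← pow_two ‖g x‖] at h5
    linarith
  -- ‖g‖ > 0
  have hg_pos : 0 < ‖g‖ := by
    obtain ⟨h, hgh, hhg⟩ := hg_inv
    rcases (norm_nonneg g).lt_or_eq with h' | h'
    · exact h'
    · exfalso
      have hvm0 : vm ≠ 0 := by
        intro h0; rw [h0, norm_zero] at hvm; norm_num at hvm
      have hid : h (g vm) = vm := by
        have h2 := ContinuousLinearMap.ext_iff.mp hhg vm
        rwa [ContinuousLinearMap.comp_apply, ContinuousLinearMap.id_apply] at h2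
      rw [hgv, ← h', zero_smul, map_zero] at hid
      exact hvm0 hid.symm
  -- part 1
  have h1 : |c| * ‖g‖ ≤ ‖g x‖ := by
    have h2 : (|c| * ‖g‖) ^ 2 ≤ ‖g x‖ ^ 2 := by
      rw [mul_pow, sq_abs, hgxnorm]
      nlinarith [sq_nonneg ‖g w‖]
    have h3 := Real.sqrt_le_sqrt h2
    rwa [Real.sqrt_sq (by positivity), Real.sqrt_sq (norm_nonneg _)] at h3
  have habs : ε * ‖g‖ ≤ ‖g x‖ :=
    le_trans (mul_le_mul_of_nonneg_right hcε hg_pos.le) h1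
  refine ⟨habs, ?_, ?_⟩
  · -- main angle bound
    have hN : 0 < ‖g x‖ := lt_of_lt_of_le (by positivity) habs
    have hinner : ⟪(‖g x‖)⁻¹ • g x, vp⟫ = (‖g x‖)⁻¹ * (c * ‖g‖) := by
      rw [real_inner_smul_left, hgx, inner_add_left, real_inner_smul_left, hrun vp vp, hvpvp,
        hrun (g w) vp, hgw_orth]
      ring
    have habst : |(‖g x‖)⁻¹ * (c * ‖g‖)| = (‖g x‖)⁻¹ * (|c| * ‖g‖) := by
      rw [abs_mul, abs_mul, abs_of_nonneg (by positivity : (0:ℝ) ≤ (‖g x‖)⁻¹),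
        abs_of_nonneg (norm_nonneg g)]
    rw [hinner, habst]
    exact aux_arccos_bound σg ε |c| ‖g‖ ‖g w‖ ‖g x‖ ‖w‖ hε hcε hg_pos hN hσ0
      (norm_nonneg _) (norm_nonneg _) (by rw [hgxnorm, sq_abs]) hgw_le
      (by rw [sq_abs]; exact hwnorm)
  · -- sqrt bound
    have hs1 : Real.sqrt (1 - ε ^ 2) ≤ 1 := by
      have h9 := Real.sqrt_le_sqrt (show 1 - ε ^ 2 ≤ 1 by nlinarith [sq_nonneg ε])
      simpa using h9
    rw [div_le_div_iff₀ hε hε]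
    have h2 := mul_le_mul_of_nonneg_right
      (mul_le_mul_of_nonneg_left hs1 hσ0) hε.le
    linarith [h2]
end

section
/- Projective contraction: Given ε > 0, κ > 0, and g ∈ GL(m,ℝ) with σ(g) := s₂(g)/s₁(g) ≤ κ, the restriction of the projectivized map φ_g to the set of directions x̂ ∈ ℙ^{m−1} with |⟨x, v₋(g)⟩| ≥ ε has Lipschitz constant at most κ(1+ε)/ε², and this set is mapped into the ball of radius κ/ε around v₊(g). -/
/-!
Write a unit vector as `p = a v₋ + u` with `u ⊥ v₋`. Then `g p = a s₁ v₊ + g u` with `g u ⊥ v₊`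
and `‖g u‖ ≤ s₂ ‖u‖`, so the angle `θ` between `g p` and `v₊` satisfies
`θ · |a| s₁ ≤ θ cos θ ‖g p‖ ≤ sin θ ‖g p‖ = ‖g u‖ ≤ s₂`, which is the ball estimate.

For two directions, `g` multiplies the area `√(‖p‖²‖q‖² - ⟪p, q⟫²) = sin d(p, q) ≤ d(p, q)` by at
most `s₁ s₂`, while `‖g p‖ ‖g q‖ + |⟪g p, g q⟫| ≥ 2 s₁² |a b|`. The half-angle inequality
`θ (1 + cos θ) ≤ 2 sin θ` combines the two into `d(φ p, φ q) ≤ σ(g) / ε² · d(p, q)`.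
-/

open Real
open scoped RealInnerProductSpace

namespace Real

theorem mul_cos_le_sin {x : ℝ} (hx₀ : 0 ≤ x) (hx : x ≤ π / 2) : x * cos x ≤ sin x := by
  rcases hx.eq_or_lt with rfl | hx
  · simp
  have hcos : 0 < cos x := cos_pos_of_mem_Ioo ⟨by linarith [pi_pos], hx⟩
  have := le_tan hx₀ hx
  rwa [tan_eq_sin_div_cos, le_div_iff₀ hcos] at this

theorem mul_one_add_cos_le_two_mul_sin {x : ℝ} (hx₀ : 0 ≤ x) (hx : x ≤ π) :
    x * (1 + cos x) ≤ 2 * sin x := by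
  obtain ⟨y, rfl⟩ : ∃ y, x = 2 * y := ⟨x / 2, by ring⟩
  have half := mul_cos_le_sin (x := y) (by linarith) (by linarith)
  have hcos : 0 ≤ cos y := cos_nonneg_of_mem_Icc ⟨by linarith [pi_pos], by linarith⟩
  rw [cos_two_mul, sin_two_mul]
  nlinarith [mul_le_mul_of_nonneg_right half hcos]

theorem arccos_mul_le_sqrt_one_sub_sq {c : ℝ} (hc₀ : 0 ≤ c) (hc₁ : c ≤ 1) :
    arccos c * c ≤ √(1 - c ^ 2) := by
  have := mul_cos_le_sin (arccos_nonneg c) (arccos_le_pi_div_two.2 hc₀)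
  rwa [cos_arccos (by linarith) hc₁, sin_arccos] at this

theorem arccos_mul_one_add_le {c : ℝ} (hc₀ : -1 ≤ c) (hc₁ : c ≤ 1) :
    arccos c * (1 + c) ≤ 2 * √(1 - c ^ 2) := by
  have := mul_one_add_cos_le_two_mul_sin (arccos_nonneg c) (arccos_le_pi c)
  rwa [cos_arccos hc₀ hc₁, sin_arccos] at this

theorem sqrt_one_sub_sq_le_arccos (c : ℝ) : √(1 - c ^ 2) ≤ arccos c :=
  sin_arccos c ▸ sin_le (arccos_nonneg c)

theorem sqrt_one_sub_div_sq_mul (a : ℝ) {N : ℝ} (hN : 0 < N) :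
    √(1 - (a / N) ^ 2) * N = √(N ^ 2 - a ^ 2) := by
  rw [← sqrt_sq hN.le, ← sqrt_mul' _ (sq_nonneg N), sqrt_sq hN.le]
  congr 1
  field_simp

end Real

section Gram

variable {E F : Type*} [NormedAddCommGroup E] [InnerProductSpace ℝ E]
  [NormedAddCommGroup F] [InnerProductSpace ℝ F]

def gramDet (x y : F) : ℝ := ‖x‖ ^ 2 * ‖y‖ ^ 2 - ⟪x, y⟫ ^ 2

theorem gramDet_nonneg (x y : F) : 0 ≤ gramDet x y := by
  rw [gramDet, sub_nonneg, ← mul_pow, ← sq_abs]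
  exact pow_le_pow_left₀ (abs_nonneg _) (abs_real_inner_le_norm x y) 2

theorem gramDet_le (x y : F) : gramDet x y ≤ ‖x‖ ^ 2 * ‖y‖ ^ 2 :=
  sub_le_self _ (sq_nonneg _)

theorem gramDet_of_inner_eq_zero {x y : F} (h : ⟪x, y⟫ = 0) :
    gramDet x y = ‖x‖ ^ 2 * ‖y‖ ^ 2 := by
  simp [gramDet, h]

theorem gramDet_sub_smul_right (x y : F) (t : ℝ) : gramDet x (y - t • x) = gramDet x y := by
  simp only [gramDet, norm_sub_sq_real, inner_sub_right, real_inner_smul_right, norm_smul,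
    real_inner_self_eq_norm_sq, real_inner_comm x y, mul_pow, Real.norm_eq_abs, sq_abs]
  ring

theorem gramDet_smul_add_smul_add {v y y' : F} (hv : ‖v‖ = 1) (hy : ⟪v, y⟫ = 0)
    (hy' : ⟪v, y'⟫ = 0) (α β : ℝ) :
    gramDet (α • v + y) (β • v + y') = ‖α • y' - β • y‖ ^ 2 + gramDet y y' := by
  simp only [gramDet, norm_add_sq_real, norm_sub_sq_real, inner_add_left, inner_add_right,
    real_inner_smul_left, real_inner_smul_right, norm_smul, real_inner_self_eq_norm_sq,
    real_inner_comm v y, real_inner_comm y y', hv, hy, hy', mul_pow,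
    Real.norm_eq_abs, sq_abs]
  ring

theorem gramDet_map_le (T : E →ₗ[ℝ] F) (K : Submodule ℝ E) {r : ℝ}
    (hT : ∀ w ∈ K, ‖T w‖ ≤ r * ‖w‖) {u w : E} (hu : u ∈ K) (hw : w ∈ K) :
    gramDet (T u) (T w) ≤ r ^ 4 * gramDet u w := by
  rcases eq_or_ne u 0 with rfl | hu₀
  · simp [gramDet]
  set w' := w - (⟪u, w⟫ / ‖u‖ ^ 2) • u
  have hw' : w' ∈ K := K.sub_mem hw (K.smul_mem _ hu)
  have horth : ⟪u, w'⟫ = 0 := by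
    have : ‖u‖ ≠ 0 := norm_ne_zero_iff.2 hu₀
    rw [inner_sub_right, real_inner_smul_right, real_inner_self_eq_norm_sq]
    field_simp
    ring
  calc gramDet (T u) (T w) = gramDet (T u) (T w') := by
        rw [map_sub, map_smul, gramDet_sub_smul_right]
    _ ≤ ‖T u‖ ^ 2 * ‖T w'‖ ^ 2 := gramDet_le _ _
    _ ≤ (r * ‖u‖) ^ 2 * (r * ‖w'‖) ^ 2 := by gcongr; exacts [hT u hu, hT w' hw']
    _ = r ^ 4 * gramDet u w' := by rw [gramDet_of_inner_eq_zero horth]; ring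
    _ = r ^ 4 * gramDet u w := by rw [gramDet_sub_smul_right]

end Gram

section Angle

variable {F : Type*} [NormedAddCommGroup F] [InnerProductSpace ℝ F]

theorem inner_sub_inner_smul_self {v : F} (hv : ‖v‖ = 1) (x : F) : ⟪v, x - ⟪v, x⟫ • v⟫ = 0 := by
  rw [inner_sub_right, real_inner_smul_right, real_inner_self_eq_norm_sq, hv]
  ring

theorem norm_sub_inner_smul_sq {v : F} (hv : ‖v‖ = 1) (x : F) :
    ‖x - ⟪v, x⟫ • v‖ ^ 2 = ‖x‖ ^ 2 - ⟪v, x⟫ ^ 2 := by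
  rw [norm_sub_sq_real, real_inner_smul_right, norm_smul, Real.norm_eq_abs, mul_pow, sq_abs, hv,
    real_inner_comm]
  ring

theorem norm_sub_inner_smul_le {v : F} (hv : ‖v‖ = 1) (x : F) : ‖x - ⟪v, x⟫ • v‖ ≤ ‖x‖ := by
  rw [← pow_le_pow_iff_left₀ (norm_nonneg _) (norm_nonneg _) two_ne_zero,
    norm_sub_inner_smul_sq hv]
  linarith [sq_nonneg ⟪v, x⟫]

theorem two_mul_abs_inner_mul_inner_le {v : F} (hv : ‖v‖ = 1) (x y : F) :
    2 * |⟪v, x⟫ * ⟪v, y⟫| ≤ ‖x‖ * ‖y‖ + |⟪x, y⟫| := by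
  -- compare `y` with its reflection in the line `ℝ v`
  have hrefl : ‖(2 * ⟪v, y⟫) • v - y‖ = ‖y‖ := by
    rw [← sq_eq_sq₀ (norm_nonneg _) (norm_nonneg _), norm_sub_sq_real, norm_smul,
      real_inner_smul_left, Real.norm_eq_abs, mul_pow, sq_abs, hv]
    ring
  have hcs := abs_real_inner_le_norm x ((2 * ⟪v, y⟫) • v - y)
  rw [hrefl, inner_sub_right, real_inner_smul_right, real_inner_comm v x] at hcs
  calc 2 * |⟪v, x⟫ * ⟪v, y⟫| = |(2 * ⟪v, y⟫ * ⟪v, x⟫ - ⟪x, y⟫) + ⟪x, y⟫| := by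
        rw [sub_add_cancel, ← abs_two, ← abs_mul, abs_two]; ring_nf
    _ ≤ ‖x‖ * ‖y‖ + |⟪x, y⟫| := (abs_add_le _ _).trans (by gcongr)

theorem arccos_abs_inner_normalize_mul_le {v : F} (hv : ‖v‖ = 1) (x : F) :
    arccos |⟪‖x‖⁻¹ • x, v⟫| * |⟪v, x⟫| ≤ ‖x - ⟪v, x⟫ • v‖ := by
  rcases eq_or_ne x 0 with rfl | hx
  · simp
  have hx' : 0 < ‖x‖ := norm_pos_iff.2 hx
  have hc : |⟪‖x‖⁻¹ • x, v⟫| = |⟪v, x⟫| / ‖x‖ := by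
    rw [real_inner_smul_left, abs_mul, abs_inv, abs_norm, real_inner_comm, inv_mul_eq_div]
  have hc₁ : |⟪v, x⟫| / ‖x‖ ≤ 1 :=
    div_le_one_of_le₀ (by simpa [hv] using abs_real_inner_le_norm v x) hx'.le
  rw [hc]
  calc arccos (|⟪v, x⟫| / ‖x‖) * |⟪v, x⟫|
      = arccos (|⟪v, x⟫| / ‖x‖) * (|⟪v, x⟫| / ‖x‖) * ‖x‖ := by field_simp
    _ ≤ √(1 - (|⟪v, x⟫| / ‖x‖) ^ 2) * ‖x‖ := by
        gcongr
        exact arccos_mul_le_sqrt_one_sub_sq (by positivity) hc₁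
    _ = ‖x - ⟪v, x⟫ • v‖ := by
        rw [sqrt_one_sub_div_sq_mul _ hx', sq_abs, ← norm_sub_inner_smul_sq hv,
          sqrt_sq (norm_nonneg _)]

theorem arccos_abs_inner_normalize_normalize_mul_le (x y : F) :
    arccos |⟪‖x‖⁻¹ • x, ‖y‖⁻¹ • y⟫| * (‖x‖ * ‖y‖ + |⟪x, y⟫|) ≤ 2 * √(gramDet x y) := by
  rcases eq_or_ne x 0 with rfl | hx
  · simp
  rcases eq_or_ne y 0 with rfl | hy
  · simp
  have hN : 0 < ‖x‖ * ‖y‖ := by positivity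
  have hc : |⟪‖x‖⁻¹ • x, ‖y‖⁻¹ • y⟫| = |⟪x, y⟫| / (‖x‖ * ‖y‖) := by
    rw [real_inner_smul_left, real_inner_smul_right, abs_mul, abs_mul, abs_inv, abs_inv,
      abs_norm, abs_norm]
    field_simp
  have hc₁ : |⟪x, y⟫| / (‖x‖ * ‖y‖) ≤ 1 := div_le_one_of_le₀ (abs_real_inner_le_norm x y) hN.le
  rw [hc]
  calc arccos (|⟪x, y⟫| / (‖x‖ * ‖y‖)) * (‖x‖ * ‖y‖ + |⟪x, y⟫|)
      = arccos (|⟪x, y⟫| / (‖x‖ * ‖y‖)) * (1 + |⟪x, y⟫| / (‖x‖ * ‖y‖)) * (‖x‖ * ‖y‖) := by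
        field_simp
    _ ≤ 2 * √(1 - (|⟪x, y⟫| / (‖x‖ * ‖y‖)) ^ 2) * (‖x‖ * ‖y‖) := by
        refine mul_le_mul_of_nonneg_right (arccos_mul_one_add_le ?_ hc₁) hN.le
        linarith [div_nonneg (abs_nonneg ⟪x, y⟫) hN.le]
    _ = 2 * √(gramDet x y) := by
        rw [mul_assoc, sqrt_one_sub_div_sq_mul _ hN, gramDet, mul_pow, sq_abs]

theorem sqrt_gramDet_le_arccos {p q : F} (hp : ‖p‖ = 1) (hq : ‖q‖ = 1) :
    √(gramDet p q) ≤ arccos |⟪p, q⟫| := by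
  simpa [gramDet, hp, hq, sq_abs] using sqrt_one_sub_sq_le_arccos |⟪p, q⟫|

end Angle

section SingularTriple

variable {E F : Type*} [NormedAddCommGroup E] [InnerProductSpace ℝ E]
  [NormedAddCommGroup F] [InnerProductSpace ℝ F]

/-- `c` plays the role of the top singular value `s₁(g)`, with singular directions `g vm = c • vp`,
and `s` that of an upper bound for `σ(g) = s₂(g) / s₁(g)`. -/
structure IsTopSingularTriple (g : E →L[ℝ] F) (vm : E) (vp : F) (c s : ℝ) : Prop where
  norm_vm : ‖vm‖ = 1
  norm_vp : ‖vp‖ = 1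
  pos : 0 < c
  nonneg : 0 ≤ s
  le_one : s ≤ 1
  apply_vm : g vm = c • vp
  inner_apply_eq_zero : ∀ w, ⟪vm, w⟫ = 0 → ⟪vp, g w⟫ = 0
  norm_apply_le : ∀ w, ⟪vm, w⟫ = 0 → ‖g w‖ ≤ s * c * ‖w‖

namespace IsTopSingularTriple

variable {g : E →L[ℝ] F} {vm : E} {vp : F} {c s : ℝ}

theorem apply_eq (h : IsTopSingularTriple g vm vp c s) (x : E) :
    g x = (c * ⟪vm, x⟫) • vp + g (x - ⟪vm, x⟫ • vm) := by
  rw [map_sub, map_smul, h.apply_vm, smul_smul, mul_comm, add_sub_cancel]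

theorem inner_apply (h : IsTopSingularTriple g vm vp c s) (x : E) :
    ⟪vp, g x⟫ = c * ⟪vm, x⟫ := by
  rw [h.apply_eq x, inner_add_right, real_inner_smul_right, real_inner_self_eq_norm_sq, h.norm_vp,
    h.inner_apply_eq_zero _ (inner_sub_inner_smul_self h.norm_vm x)]
  ring

theorem apply_sub_inner_smul (h : IsTopSingularTriple g vm vp c s) (x : E) :
    g x - ⟪vp, g x⟫ • vp = g (x - ⟪vm, x⟫ • vm) := by
  rw [h.inner_apply, sub_eq_iff_eq_add', h.apply_eq x]

theorem gramDet_apply_le (h : IsTopSingularTriple g vm vp c s) (x y : E) :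
    gramDet (g x) (g y) ≤ (s * c ^ 2) ^ 2 * gramDet x y := by
  set u := x - ⟪vm, x⟫ • vm
  set w := y - ⟪vm, y⟫ • vm
  have hu : ⟪vm, u⟫ = 0 := inner_sub_inner_smul_self h.norm_vm x
  have hw : ⟪vm, w⟫ = 0 := inner_sub_inner_smul_self h.norm_vm y
  have hsplit : gramDet x y = ‖⟪vm, x⟫ • w - ⟪vm, y⟫ • u‖ ^ 2 + gramDet u w := by
    rw [← gramDet_smul_add_smul_add h.norm_vm hu hw, add_sub_cancel, add_sub_cancel]
  have hsplit_g : gramDet (g x) (g y) =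
      ‖(c * ⟪vm, x⟫) • g w - (c * ⟪vm, y⟫) • g u‖ ^ 2 + gramDet (g u) (g w) := by
    rw [← gramDet_smul_add_smul_add h.norm_vp (h.inner_apply_eq_zero u hu)
      (h.inner_apply_eq_zero w hw), ← h.apply_eq, ← h.apply_eq]
  have hcross : ‖(c * ⟪vm, x⟫) • g w - (c * ⟪vm, y⟫) • g u‖ ^ 2 ≤
      (s * c ^ 2) ^ 2 * ‖⟪vm, x⟫ • w - ⟪vm, y⟫ • u‖ ^ 2 := by
    have horth : ⟪vm, ⟪vm, x⟫ • w - ⟪vm, y⟫ • u⟫ = 0 := by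
      rw [inner_sub_right, real_inner_smul_right, real_inner_smul_right, hu, hw]
      ring
    rw [mul_smul, mul_smul, ← smul_sub, ← map_smul, ← map_smul, ← map_sub, norm_smul,
      Real.norm_eq_abs, abs_of_pos h.pos]
    calc (c * ‖g (⟪vm, x⟫ • w - ⟪vm, y⟫ • u)‖) ^ 2
        ≤ (c * (s * c * ‖⟪vm, x⟫ • w - ⟪vm, y⟫ • u‖)) ^ 2 :=
          pow_le_pow_left₀ (mul_nonneg h.pos.le (norm_nonneg _))
            (mul_le_mul_of_nonneg_left (h.norm_apply_le _ horth) h.pos.le) 2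
      _ = (s * c ^ 2) ^ 2 * ‖⟪vm, x⟫ • w - ⟪vm, y⟫ • u‖ ^ 2 := by ring
  have hcontract : ∀ z ∈ (ℝ ∙ vm)ᗮ, ‖(g : E →ₗ[ℝ] F) z‖ ≤ (s * c) * ‖z‖ := fun z hz =>
    h.norm_apply_le z (Submodule.mem_orthogonal_singleton_iff_inner_right.1 hz)
  have hperp : gramDet (g u) (g w) ≤ (s * c ^ 2) ^ 2 * gramDet u w :=
    calc gramDet (g u) (g w) ≤ (s * c) ^ 4 * gramDet u w :=
          gramDet_map_le _ _ hcontract (Submodule.mem_orthogonal_singleton_iff_inner_right.2 hu)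
            (Submodule.mem_orthogonal_singleton_iff_inner_right.2 hw)
      _ ≤ (s * c ^ 2) ^ 2 * gramDet u w := by
          refine mul_le_mul_of_nonneg_right ?_ (gramDet_nonneg u w)
          calc (s * c) ^ 4 = (s * c ^ 2) ^ 2 * s ^ 2 := by ring
            _ ≤ (s * c ^ 2) ^ 2 :=
                mul_le_of_le_one_right (sq_nonneg _) (pow_le_one₀ h.nonneg h.le_one)
  rw [hsplit, hsplit_g]
  nlinarith [hcross, hperp]

theorem arccos_abs_inner_normalize_le (h : IsTopSingularTriple g vm vp c s) {ε : ℝ}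
    (hε : 0 < ε) {p : E} (hp : ‖p‖ = 1) (hpε : ε ≤ |⟪vm, p⟫|) :
    arccos |⟪‖g p‖⁻¹ • g p, vp⟫| ≤ s / ε := by
  set θ := arccos |⟪‖g p‖⁻¹ • g p, vp⟫|
  have hθ : 0 ≤ θ := arccos_nonneg _
  have key : θ * |⟪vm, p⟫| * c ≤ s * c :=
    calc θ * |⟪vm, p⟫| * c = θ * |⟪vp, g p⟫| := by
          rw [h.inner_apply, abs_mul, abs_of_pos h.pos]; ring
      _ ≤ ‖g p - ⟪vp, g p⟫ • vp‖ := arccos_abs_inner_normalize_mul_le h.norm_vp _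
      _ = ‖g (p - ⟪vm, p⟫ • vm)‖ := by rw [h.apply_sub_inner_smul]
      _ ≤ s * c * ‖p - ⟪vm, p⟫ • vm‖ :=
          h.norm_apply_le _ (inner_sub_inner_smul_self h.norm_vm p)
      _ ≤ s * c := mul_le_of_le_one_right (mul_nonneg h.nonneg h.pos.le)
          (hp ▸ norm_sub_inner_smul_le h.norm_vm p)
  rw [le_div_iff₀ hε]
  calc θ * ε ≤ θ * |⟪vm, p⟫| := by gcongr
    _ ≤ s := le_of_mul_le_mul_right key h.pos

theorem arccos_abs_inner_normalize_normalize_le (h : IsTopSingularTriple g vm vp c s)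
    {ε : ℝ} (hε : 0 < ε) {p q : E} (hp : ‖p‖ = 1) (hq : ‖q‖ = 1) (hpε : ε ≤ |⟪vm, p⟫|)
    (hqε : ε ≤ |⟪vm, q⟫|) :
    arccos |⟪‖g p‖⁻¹ • g p, ‖g q‖⁻¹ • g q⟫| ≤ s / ε ^ 2 * arccos |⟪p, q⟫| := by
  set θ := arccos |⟪‖g p‖⁻¹ • g p, ‖g q‖⁻¹ • g q⟫|
  have hθ : 0 ≤ θ := arccos_nonneg _
  have hlower : 2 * (c ^ 2 * ε ^ 2) ≤ ‖g p‖ * ‖g q‖ + |⟪g p, g q⟫| := by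
    refine le_trans ?_ (two_mul_abs_inner_mul_inner_le h.norm_vp (g p) (g q))
    rw [h.inner_apply, h.inner_apply, show c * ⟪vm, p⟫ * (c * ⟪vm, q⟫) = c ^ 2 * (⟪vm, p⟫ * ⟪vm, q⟫)
      by ring, abs_mul, abs_of_pos (pow_pos h.pos 2), abs_mul, sq ε]
    gcongr
  have hgram : √(gramDet (g p) (g q)) ≤ s * c ^ 2 * arccos |⟪p, q⟫| :=
    calc √(gramDet (g p) (g q)) ≤ √((s * c ^ 2) ^ 2 * gramDet p q) :=
          sqrt_le_sqrt (h.gramDet_apply_le p q)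
      _ = s * c ^ 2 * √(gramDet p q) := by
          rw [sqrt_mul (sq_nonneg _), sqrt_sq (by have := h.nonneg; positivity)]
      _ ≤ s * c ^ 2 * arccos |⟪p, q⟫| := by
          have := h.nonneg
          gcongr
          exact sqrt_gramDet_le_arccos hp hq
  have key : θ * ε ^ 2 * (2 * c ^ 2) ≤ s * arccos |⟪p, q⟫| * (2 * c ^ 2) :=
    calc θ * ε ^ 2 * (2 * c ^ 2) = θ * (2 * (c ^ 2 * ε ^ 2)) := by ring
      _ ≤ θ * (‖g p‖ * ‖g q‖ + |⟪g p, g q⟫|) := by gcongr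
      _ ≤ 2 * √(gramDet (g p) (g q)) := arccos_abs_inner_normalize_normalize_mul_le _ _
      _ ≤ s * arccos |⟪p, q⟫| * (2 * c ^ 2) := by linarith
  rw [div_mul_eq_mul_div, le_div_iff₀ (by positivity)]
  exact le_of_mul_le_mul_right key (by have := h.pos; positivity)

end IsTopSingularTriple

end SingularTriple

theorem projective_contraction_general {m : ℕ}
    (g : EuclideanSpace ℝ (Fin m) →L[ℝ] EuclideanSpace ℝ (Fin m))
    (hg_inv : ∃ h, g.comp h = ContinuousLinearMap.id ℝ (EuclideanSpace ℝ (Fin m)) ∧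
      h.comp g = ContinuousLinearMap.id ℝ (EuclideanSpace ℝ (Fin m)))
    (vm vp : EuclideanSpace ℝ (Fin m)) (σg ε κ : ℝ)
    (hvm : ‖vm‖ = 1) (hvp : ‖vp‖ = 1)
    (hgv : g vm = ‖g‖ • vp)
    (hsvd : ∀ w, ⟪vm, w⟫ = 0 → ⟪vp, g w⟫ = 0 ∧ ‖g w‖ ≤ σg * ‖g‖ * ‖w‖)
    (hε : 0 < ε) (hκ : 0 < κ) (hσκ : σg ≤ κ)
    (φ : EuclideanSpace ℝ (Fin m) → EuclideanSpace ℝ (Fin m))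
    (hφ : ∀ p, φ p = ‖g p‖⁻¹ • g p)
    (dproj : EuclideanSpace ℝ (Fin m) → EuclideanSpace ℝ (Fin m) → ℝ)
    (hdproj : ∀ p q, dproj p q = Real.arccos |⟪p, q⟫|) :
    (∀ p q : EuclideanSpace ℝ (Fin m), ‖p‖ = 1 → ‖q‖ = 1 →
      ε ≤ |⟪p, vm⟫| → ε ≤ |⟪q, vm⟫| →
      dproj (φ p) (φ q) ≤ κ * (1 + ε) / ε ^ 2 * dproj p q) ∧
    (∀ p : EuclideanSpace ℝ (Fin m), ‖p‖ = 1 → ε ≤ |⟪p, vm⟫| →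
      dproj (φ p) vp ≤ κ / ε) := by
  have hg : 0 < ‖g‖ := by
    obtain ⟨h, hgh, -⟩ := hg_inv
    refine norm_pos_iff.2 fun hg₀ => ?_
    have : vm = 0 := by simpa [hg₀] using congrArg (· vm) hgh.symm
    simp [this] at hvm
  -- the ratio can be capped at `1` because `‖g w‖ ≤ ‖g‖ ‖w‖`
  have hT : IsTopSingularTriple g vm vp ‖g‖ (min κ 1) :=
    { norm_vm := hvm, norm_vp := hvp, pos := hg, nonneg := le_min hκ.le zero_le_one,
      le_one := min_le_right _ _, apply_vm := hgv
      inner_apply_eq_zero := fun w hw => (hsvd w hw).1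
      norm_apply_le := fun w hw => by
        rw [min_mul_of_nonneg _ _ hg.le, min_mul_of_nonneg _ _ (norm_nonneg w), one_mul]
        exact le_min ((hsvd w hw).2.trans (by gcongr)) (g.le_opNorm w) }
  have hs : min κ 1 ≤ κ := min_le_left _ _
  refine ⟨fun p q hp hq hpε hqε => ?_, fun p hp hpε => ?_⟩
  · rw [real_inner_comm] at hpε hqε
    rw [hdproj, hdproj, hφ, hφ]
    refine (hT.arccos_abs_inner_normalize_normalize_le hε hp hq hpε hqε).trans
      (mul_le_mul_of_nonneg_right ?_ (arccos_nonneg _))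
    gcongr
    exact hs.trans (le_mul_of_one_le_right hκ.le (by linarith))
  · rw [real_inner_comm] at hpε
    rw [hdproj, hφ]
    exact (hT.arccos_abs_inner_normalize_le hε hp hpε).trans (by gcongr)

/-- **Projective contraction.** Given `ε > 0`, `κ > 0` and an invertible map `g` of `ℝ^m`
with `σ(g) = s₂(g)/s₁(g) ≤ κ` (singular data encoded by unit vectors `v₋, v₊` with
`g v₋ = ‖g‖ v₊` and the contraction property on `v₋^⊥`), the projectivized map
`φ_g(x) = g·x/‖g·x‖`, restricted to the set of directions `x` with `|⟪x, v₋⟫| ≥ ε`, has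
Lipschitz constant at most `κ(1+ε)/ε²` with respect to the angle metric
`d(x,y) = arccos |⟪x,y⟫|` on `ℙ^{m−1}`, and this set is mapped into the ball of radius
`κ/ε` around `v₊`. -/
theorem projective_contraction {m : ℕ}
    (g : EuclideanSpace ℝ (Fin m) →L[ℝ] EuclideanSpace ℝ (Fin m))
    (hg_inv : ∃ h, g.comp h = ContinuousLinearMap.id ℝ (EuclideanSpace ℝ (Fin m)) ∧
      h.comp g = ContinuousLinearMap.id ℝ (EuclideanSpace ℝ (Fin m)))
    (vm vp : EuclideanSpace ℝ (Fin m)) (σg ε κ : ℝ)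
    (hvm : ‖vm‖ = 1) (hvp : ‖vp‖ = 1)
    (hgv : g vm = ‖g‖ • vp)
    (hσ0 : 0 ≤ σg)
    (hsvd : ∀ w, ⟪vm, w⟫ = 0 → ⟪vp, g w⟫ = 0 ∧ ‖g w‖ ≤ σg * ‖g‖ * ‖w‖)
    (hε : 0 < ε) (hκ : 0 < κ) (hσκ : σg ≤ κ)
    (φ : EuclideanSpace ℝ (Fin m) → EuclideanSpace ℝ (Fin m))
    (hφ : ∀ p, φ p = ‖g p‖⁻¹ • g p)
    (dproj : EuclideanSpace ℝ (Fin m) → EuclideanSpace ℝ (Fin m) → ℝ)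
    (hdproj : ∀ p q, dproj p q = Real.arccos |⟪p, q⟫|) :
    (∀ p q : EuclideanSpace ℝ (Fin m), ‖p‖ = 1 → ‖q‖ = 1 →
      ε ≤ |⟪p, vm⟫| → ε ≤ |⟪q, vm⟫| →
      dproj (φ p) (φ q) ≤ κ * (1 + ε) / ε ^ 2 * dproj p q) ∧
    (∀ p : EuclideanSpace ℝ (Fin m), ‖p‖ = 1 → ε ≤ |⟪p, vm⟫| →
      dproj (φ p) vp ≤ κ / ε) :=
  projective_contraction_general g hg_inv vm vp σg ε κ hvm hvp hgv hsvd hε hκ hσκ φ hφ dproj hdproj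
end

section
/- Abstract continuity lemma: Let 𝒳 be a topological space, a ∈ 𝒳, and f₁, …, f_p: 𝒳 → ℝ functions such that (i) f₁ ≥ f₂ ≥ … ≥ f_p pointwise on 𝒳, (ii) f₁(a) = f₂(a) = … = f_p(a), (iii) the sum g = f₁ + … + f_p is continuous at a, and (iv) f₁ is upper semi-continuous at a. Then every f_j (1 ≤ j ≤ p) is continuous at a. -/
/-- **Abstract continuity lemma.** Let `𝒳` be a topological space, `a ∈ 𝒳`, and
`f₁ ≥ f₂ ≥ … ≥ f_p : 𝒳 → ℝ` pointwise, with `f₁(a) = … = f_p(a)`.  If the sum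
`g = f₁ + … + f_p` is continuous at `a` and `f₁` is upper semicontinuous at `a`, then
every `f_j` is continuous at `a`. -/
theorem abstract_continuity_lemma {X : Type*} [TopologicalSpace X]
    (a : X) (p : ℕ) (hp : 0 < p) (f : Fin p → X → ℝ)
    (hmono : ∀ i j : Fin p, i ≤ j → ∀ x : X, f j x ≤ f i x)
    (heq : ∀ i j : Fin p, f i a = f j a)
    (hsum : ContinuousAt (fun x => ∑ i : Fin p, f i x) a)
    (husc : UpperSemicontinuousAt (f ⟨0, hp⟩) a) :
    ∀ j : Fin p, ContinuousAt (f j) a := by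
  set z : Fin p := ⟨0, hp⟩ with hz
  set c : ℝ := f z a with hc
  have hfa : ∀ i : Fin p, f i a = c := fun i => heq i z
  have hsa : (∑ i : Fin p, f i a) = p * c := by
    rw [Finset.sum_congr rfl fun i _ => hfa i]
    simp [mul_comm]
  -- f j x ≥ g x - (p-1) * f z x  since the other p-1 terms are ≤ f z x.
  have hle : ∀ (j : Fin p) (x : X),
      (∑ i : Fin p, f i x) - (p - 1 : ℝ) * f z x ≤ f j x := by
    intro j x
    have hb : ∀ i : Fin p, f i x ≤ f z x := fun i =>
      hmono z i (by simp [hz, Fin.le_def]) x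
    have : (∑ i : Fin p, f i x) ≤ f j x + (p - 1 : ℝ) * f z x := by
      rw [← Finset.sum_erase_add _ _ (Finset.mem_univ j)]
      have hcard : ((Finset.univ.erase j).card : ℝ) = (p - 1 : ℝ) := by
        rw [Finset.card_erase_of_mem (Finset.mem_univ j)]
        simp [Nat.cast_sub hp]
      have hbound : (∑ i ∈ Finset.univ.erase j, f i x)
          ≤ (p - 1 : ℝ) * f z x := by
        calc (∑ i ∈ Finset.univ.erase j, f i x)
            ≤ ∑ _i ∈ Finset.univ.erase j, f z x :=
              Finset.sum_le_sum fun i _ => hb i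
          _ = (p - 1 : ℝ) * f z x := by rw [Finset.sum_const, nsmul_eq_mul, hcard]
      linarith
    linarith
  -- first: f z is continuous at a
  have hzc : ContinuousAt (f z) a := by
    rw [continuousAt_iff_lower_upperSemicontinuousAt]
    refine ⟨?_, husc⟩
    intro y hy
    -- y < f z a = c; use g x ≤ p * f z x, so f z x ≥ g x / p
    have hgp : Filter.Tendsto (fun x => (∑ i : Fin p, f i x) / (p : ℝ)) (nhds a)
        (nhds c) := by
      have := hsum.tendsto.div_const (p : ℝ)
      rw [hsa] at this
      have h2 : (p:ℝ) * c / (p:ℝ) = c := by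
        field_simp
      rwa [h2] at this
    have hev : ∀ᶠ x in nhds a, y < (∑ i : Fin p, f i x) / (p : ℝ) :=
      hgp.eventually (eventually_gt_nhds hy)
    filter_upwards [hev] with x hx
    have hb : ∀ i : Fin p, f i x ≤ f z x := fun i =>
      hmono z i (by simp [hz, Fin.le_def]) x
    have hsle : (∑ i : Fin p, f i x) ≤ p * f z x := by
      calc (∑ i : Fin p, f i x) ≤ ∑ _i : Fin p, f z x :=
            Finset.sum_le_sum fun i _ => hb i
        _ = p * f z x := by rw [Finset.sum_const, nsmul_eq_mul]; simp
    have hp' : (0:ℝ) < p := by positivity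
    calc y < (∑ i : Fin p, f i x) / (p : ℝ) := hx
      _ ≤ f z x := by rw [div_le_iff₀ hp']; linarith
  -- now squeeze every f j
  intro j
  have hlow : Filter.Tendsto (fun x => (∑ i : Fin p, f i x) - (p - 1 : ℝ) * f z x)
      (nhds a) (nhds c) := by
    have := hsum.tendsto.sub ((hzc.tendsto.const_mul ((p : ℝ) - 1)))
    rw [hsa, hc] at this
    convert this using 2
    ring
  have hup : Filter.Tendsto (f z) (nhds a) (nhds c) := hzc.tendsto
  have : Filter.Tendsto (f j) (nhds a) (nhds c) :=
    tendsto_of_tendsto_of_tendsto_of_le_of_le hlow hup (fun x => hle j x)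
      (fun x => hmono z j (by simp [hz, Fin.le_def]) x)
  rw [ContinuousAt, hfa j]
  exact this
end
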